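/- arXiv:2508.17335 — 8 statements merged into one kernel-verified Lean document; each statement's English description precedes it below -/
import Mathlib

section
/- If P is an integer-valued polynomial that is not identically zero, then ∑_{n=0}^∞ |P(n)|²·φ^{−2n} ≥ φ (the series converges since P has polynomial growth). -/
/-- The golden ratio `(1 + √5)/2`. -/
noncomputable def phi : ℝ := (1 + Real.sqrt 5) / 2

/-- A real polynomial is integer-valued if it sends every integer to an integer. -/
def IsIVP (P : Polynomial ℝ) : Prop := ∀ n : ℤ, ∃ m : ℤ, P.eval (n : ℝ) = (m : ℝ)

/-!
By Gregory–Newton interpolation `P(n) = ∑ₖ cₖ C(n, k)`, where the `cₖ = Δᵏ P (0)` are integers.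
Put `z = φ⁻¹`, so that `z² = 1 - z`. Pascal's rule turns the moments
`T(j, k) = ∑ₙ C(n, j) C(n, k) z²ⁿ` into the recursion
`T(j+1, k+1) = z (T(j, k+1) + T(j+1, k) + T(j, k))`, which is also satisfied by
`⟨(X + z)ʲ, (X + z)ᵏ⟩` for the pairing `⟨p, q⟩ = ∑ₘ pₘ qₘ` of coefficients, because multiplication
by `X` preserves that pairing. Hence `T(j, k) = φ ⟨(X + z)ʲ, (X + z)ᵏ⟩`, and the series equals
`φ ⟨Q, Q⟩` with `Q = (∑ₖ cₖ Xᵏ) ∘ (X + z)`. Finally `⟨Q, Q⟩` is at least the square of the leading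
coefficient of `Q`, which is the last nonzero `cₖ`, a nonzero integer.
-/

open Polynomial Finset

section Newton

variable {R : Type*} [CommRing R]

noncomputable def newtonPoly (P : R[X]) : R[X] :=
  ∑ k ∈ range (P.natDegree + 1), monomial k ((fwdDiff 1)^[k] P.eval 0)

lemma coeff_newtonPoly (P : R[X]) (k : ℕ) :
    (newtonPoly P).coeff k = (fwdDiff 1)^[k] P.eval 0 := by
  simp only [newtonPoly, finsetSum_coeff, coeff_monomial, sum_ite_eq', mem_range]
  split_ifs with hk
  · rfl
  · rw [P.fwdDiff_iter_eq_zero_of_degree_lt (by omega), Pi.zero_apply]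

lemma natDegree_newtonPoly_le (P : R[X]) : (newtonPoly P).natDegree ≤ P.natDegree :=
  natDegree_le_iff_coeff_eq_zero.mpr fun k hk => by
    rw [coeff_newtonPoly, P.fwdDiff_iter_eq_zero_of_degree_lt hk, Pi.zero_apply]

lemma newtonPoly_ne_zero [IsDomain R] [CharZero R] {P : R[X]} (hP : P ≠ 0) :
    newtonPoly P ≠ 0 := fun h => by
  have := congr_arg (coeff · P.natDegree) h
  simp [coeff_newtonPoly, P.fwdDiff_iter_degree_eq_factorial, hP, Nat.factorial_ne_zero] at this

lemma eval_natCast_eq_sum_coeff_newtonPoly_mul_choose (P : R[X]) (n : ℕ) :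
    P.eval (n : R) = ∑ k ∈ range (P.natDegree + 1), (newtonPoly P).coeff k * n.choose k := by
  calc P.eval (n : R) = ∑ k ∈ range (n + 1), n.choose k • (fwdDiff 1)^[k] P.eval 0 := by
        simpa using shift_eq_sum_fwdDiff_iter 1 P.eval n 0
    _ = ∑ k ∈ range (n + P.natDegree + 1), n.choose k • (fwdDiff 1)^[k] P.eval 0 :=
        sum_subset (range_subset_range.mpr (by omega)) fun k _ hk => by
          rw [Nat.choose_eq_zero_of_lt (by simpa using hk), zero_smul]
    _ = ∑ k ∈ range (P.natDegree + 1), n.choose k • (fwdDiff 1)^[k] P.eval 0 :=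
        (sum_subset (range_subset_range.mpr (by omega)) fun k _ hk => by
          rw [P.fwdDiff_iter_eq_zero_of_degree_lt (by simpa using hk), Pi.zero_apply,
            smul_zero]).symm
    _ = _ := sum_congr rfl fun k _ => by rw [coeff_newtonPoly, nsmul_eq_mul, mul_comm]

lemma IsIVP.exists_coeff_newtonPoly_eq_intCast {P : ℝ[X]} (hP : IsIVP P) (k : ℕ) :
    ∃ m : ℤ, (newtonPoly P).coeff k = m := by
  have hvalues : ∀ i : ℕ, P.eval (0 + i • 1) ∈ (Int.castAddHom ℝ).range := fun i => by
    obtain ⟨m, hm⟩ := hP i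
    exact ⟨m, by simpa using hm.symm⟩
  obtain ⟨m, hm⟩ : (fwdDiff 1)^[k] P.eval 0 ∈ (Int.castAddHom ℝ).range := by
    rw [fwdDiff_iter_eq_sum_shift]
    exact AddSubgroup.sum_mem _ fun i _ => AddSubgroup.zsmul_mem _ (hvalues i) _
  exact ⟨m, by rw [coeff_newtonPoly, ← hm, Int.coe_castAddHom]⟩

lemma IsIVP.one_le_sq_leadingCoeff_newtonPoly {P : ℝ[X]} (hP : IsIVP P) (hne : P ≠ 0) :
    1 ≤ (newtonPoly P).leadingCoeff ^ 2 := by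
  obtain ⟨m, hm⟩ := hP.exists_coeff_newtonPoly_eq_intCast (newtonPoly P).natDegree
  have hm0 : m ≠ 0 := by
    rintro rfl
    exact newtonPoly_ne_zero hne
      (leadingCoeff_eq_zero.mp (by rw [leadingCoeff, hm, Int.cast_zero]))
  rw [leadingCoeff, hm]
  exact_mod_cast (one_le_sq_iff_one_le_abs _).mpr (Int.one_le_abs hm0)

end Newton

section CoeffPairing

variable {R : Type*} [CommSemiring R]

noncomputable def coeffPairing : R[X] →ₗ[R] R[X] →ₗ[R] R :=
  LinearMap.mk₂ R (fun p q => p.sum fun m a => a * q.coeff m)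
    (fun p p' q => sum_add_index _ _ _ (fun _ => zero_mul _) (fun _ _ _ => add_mul _ _ _))
    (fun c p q => by
      rw [sum_smul_index _ _ _ (fun _ => zero_mul _), smul_eq_mul, sum_def, sum_def, mul_sum]
      simp only [mul_assoc])
    (fun p q q' => by simp only [coeff_add, mul_add, sum_add])
    (fun c p q => by simp only [sum_def, coeff_smul, smul_eq_mul, mul_sum, mul_left_comm])

lemma coeffPairing_eq_sum_range {p : R[X]} {N : ℕ} (hp : p.natDegree < N) (q : R[X]) :
    coeffPairing p q = ∑ m ∈ range N, p.coeff m * q.coeff m :=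
  sum_over_range' p (f := fun m a => a * q.coeff m) (fun _ => zero_mul _) N hp

lemma coeffPairing_one_left (q : R[X]) : coeffPairing 1 q = q.coeff 0 := by
  rw [coeffPairing_eq_sum_range (N := 1) (by simp)]
  simp

lemma coeffPairing_one_right (p : R[X]) : coeffPairing p 1 = p.coeff 0 := by
  rw [coeffPairing_eq_sum_range (Nat.lt_succ_self _), sum_range_succ']
  simp [coeff_one]

lemma coeffPairing_X_mul_X_mul (p q : R[X]) :
    coeffPairing (X * p) (X * q) = coeffPairing p q := by
  have hp := Nat.lt_succ_self p.natDegree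
  rw [coeffPairing_eq_sum_range hp, coeffPairing_eq_sum_range (N := p.natDegree + 1 + 1),
    sum_range_succ']
  · simp [coeff_X_mul]
  · exact (natDegree_mul_le.trans (Nat.add_le_add_right natDegree_X_le _)).trans_lt (by omega)

lemma coeffPairing_X_add_C_mul {R : Type*} [CommRing R] (a : R) (p q : R[X]) :
    coeffPairing ((X + C a) * p) ((X + C a) * q)
      = a * (coeffPairing p ((X + C a) * q) + coeffPairing ((X + C a) * p) q)
        + (1 - a ^ 2) * coeffPairing p q := by
  simp only [add_mul, C_mul', map_add, map_smul, LinearMap.add_apply, LinearMap.smul_apply,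
    smul_eq_mul, coeffPairing_X_mul_X_mul]
  ring

lemma sq_leadingCoeff_le_coeffPairing_self {R : Type*} [CommRing R] [LinearOrder R]
    [IsStrictOrderedRing R] (p : R[X]) : p.leadingCoeff ^ 2 ≤ coeffPairing p p := by
  rw [coeffPairing_eq_sum_range (Nat.lt_succ_self _), leadingCoeff]
  simp_rw [← pow_two]
  exact single_le_sum (fun m _ => sq_nonneg (p.coeff m)) (self_mem_range_succ _)

end CoeffPairing

section BinomMoment

variable {r : ℝ}

noncomputable def binomMoment (r : ℝ) (j k : ℕ) : ℝ :=
  ∑' n : ℕ, (n.choose j : ℝ) * n.choose k * r ^ n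

lemma binomMoment_comm (j k : ℕ) : binomMoment r j k = binomMoment r k j :=
  tsum_congr fun n => by ring

lemma summable_choose_mul_choose_mul_pow (hr : |r| < 1) (j k : ℕ) :
    Summable fun n : ℕ => (n.choose j : ℝ) * n.choose k * r ^ n := by
  refine .of_norm_bounded (g := fun n : ℕ => (n : ℝ) ^ (j + k) * |r| ^ n)
    (summable_pow_mul_geometric_of_norm_lt_one _ (by rwa [Real.norm_eq_abs, abs_abs])) fun n => ?_
  simp only [norm_mul, norm_pow, Real.norm_eq_abs, pow_add]
  gcongr <;> exact_mod_cast Nat.choose_le_pow n _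

lemma hasSum_binomMoment (hr : |r| < 1) (j k : ℕ) :
    HasSum (fun n : ℕ => (n.choose j : ℝ) * n.choose k * r ^ n) (binomMoment r j k) :=
  (summable_choose_mul_choose_mul_pow hr j k).hasSum

lemma binomMoment_zero_zero (hr : |r| < 1) : binomMoment r 0 0 = (1 - r)⁻¹ := by
  simpa [binomMoment] using tsum_geometric_of_abs_lt_one hr

lemma eq_mul_of_hasSum_succ {f : ℕ → ℝ} {a b : ℝ} (hf : f 0 = 0)
    (ha : HasSum (fun n => f n * r ^ n) a) (hb : HasSum (fun n => f (n + 1) * r ^ n) b) :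
    a = r * b := by
  rw [← hasSum_nat_add_iff' 1] at ha
  simp only [hf, zero_mul, sum_range_one, sub_zero] at ha
  exact ha.unique (by simpa [pow_succ', mul_assoc, mul_comm, mul_left_comm] using hb.mul_left r)

lemma binomMoment_succ_zero (hr : |r| < 1) (j : ℕ) :
    binomMoment r (j + 1) 0 = r * (binomMoment r j 0 + binomMoment r (j + 1) 0) := by
  refine eq_mul_of_hasSum_succ (f := fun n => (n.choose (j + 1) : ℝ) * n.choose 0) (by simp)
    (hasSum_binomMoment hr _ _) ?_
  convert (hasSum_binomMoment hr j 0).add (hasSum_binomMoment hr (j + 1) 0) using 1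
  ext n
  simp only [Nat.choose_succ_succ, Nat.choose_zero_right]
  push_cast
  ring

lemma binomMoment_succ_succ (hr : |r| < 1) (j k : ℕ) :
    binomMoment r (j + 1) (k + 1) = r * (binomMoment r j k + binomMoment r j (k + 1)
      + binomMoment r (j + 1) k + binomMoment r (j + 1) (k + 1)) := by
  refine eq_mul_of_hasSum_succ (f := fun n => (n.choose (j + 1) : ℝ) * n.choose (k + 1))
    (by simp) (hasSum_binomMoment hr _ _) ?_
  convert (((hasSum_binomMoment hr j k).add (hasSum_binomMoment hr j (k + 1))).add
    (hasSum_binomMoment hr (j + 1) k)).add (hasSum_binomMoment hr (j + 1) (k + 1)) using 1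
  ext n
  simp only [Nat.choose_succ_succ]
  push_cast
  ring

lemma hasSum_sq_sum_mul_choose_mul_pow (hr : |r| < 1) (c : ℕ → ℝ) (N : ℕ) :
    HasSum (fun n : ℕ => (∑ k ∈ range N, c k * n.choose k) ^ 2 * r ^ n)
      (∑ j ∈ range N, ∑ k ∈ range N, c j * c k * binomMoment r j k) := by
  have hterm : ∀ n : ℕ, (∑ k ∈ range N, c k * n.choose k) ^ 2 * r ^ n
      = ∑ j ∈ range N, ∑ k ∈ range N, c j * c k * ((n.choose j : ℝ) * n.choose k * r ^ n) := by
    intro n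
    rw [sq, sum_mul_sum, sum_mul]
    exact sum_congr rfl fun j _ => by rw [sum_mul]; exact sum_congr rfl fun k _ => by ring
  simpa only [hterm] using
    hasSum_sum fun j _ => hasSum_sum fun k _ => (hasSum_binomMoment hr j k).mul_left (c j * c k)

end BinomMoment

section Golden

lemma inv_phi_sq : phi⁻¹ ^ 2 = 1 - phi⁻¹ := by
  have h : phi⁻¹ = -Real.goldenConj := Real.inv_goldenRatio
  rw [h, neg_sq, Real.goldenConj_sq]
  ring

lemma abs_inv_phi_sq_lt_one : |phi⁻¹ ^ 2| < 1 := by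
  have : 0 < phi⁻¹ := inv_pos.mpr Real.goldenRatio_pos
  rw [abs_of_nonneg (by positivity), inv_phi_sq]
  linarith

-- For `r = φ⁻²` one has `r / (1 - r) = φ⁻¹`: this solves the recursions for `binomMoment`.
lemma eq_inv_phi_mul_of_eq_inv_phi_sq_mul {a b : ℝ} (h : a = phi⁻¹ ^ 2 * (b + a)) :
    a = phi⁻¹ * b := by
  have hz : phi⁻¹ ≠ 0 := inv_ne_zero Real.goldenRatio_ne_zero
  apply mul_left_cancel₀ hz
  linear_combination h + a * inv_phi_sq

lemma binomMoment_inv_phi_sq_zero_right (j : ℕ) :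
    binomMoment (phi⁻¹ ^ 2) j 0 = phi * phi⁻¹ ^ j := by
  induction j with
  | zero => rw [binomMoment_zero_zero abs_inv_phi_sq_lt_one, inv_phi_sq]; simp
  | succ j ih =>
    rw [eq_inv_phi_mul_of_eq_inv_phi_sq_mul (binomMoment_succ_zero abs_inv_phi_sq_lt_one j), ih]
    ring

lemma binomMoment_inv_phi_sq (j k : ℕ) :
    binomMoment (phi⁻¹ ^ 2) j k
      = phi * coeffPairing ((X + C phi⁻¹) ^ j) ((X + C phi⁻¹) ^ k) := by
  induction j generalizing k with
  | zero =>
    rw [binomMoment_comm, binomMoment_inv_phi_sq_zero_right, pow_zero, coeffPairing_one_left,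
      coeff_X_add_C_pow]
    simp
  | succ j ihj =>
    induction k with
    | zero =>
      rw [binomMoment_inv_phi_sq_zero_right, pow_zero, coeffPairing_one_right, coeff_X_add_C_pow]
      simp
    | succ k ihk =>
      rw [eq_inv_phi_mul_of_eq_inv_phi_sq_mul (binomMoment_succ_succ abs_inv_phi_sq_lt_one j k),
        ihj, ihj, ihk]
      have h := coeffPairing_X_add_C_mul phi⁻¹ ((X + C phi⁻¹) ^ j) ((X + C phi⁻¹) ^ k)
      rw [← pow_succ', ← pow_succ', inv_phi_sq] at h
      rw [h]
      ring

lemma sum_mul_binomMoment_inv_phi_sq (g : ℝ[X]) {N : ℕ} (hg : g.natDegree < N) :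
    ∑ j ∈ range N, ∑ k ∈ range N, g.coeff j * g.coeff k * binomMoment (phi⁻¹ ^ 2) j k
      = phi * coeffPairing (g.comp (X + C phi⁻¹)) (g.comp (X + C phi⁻¹)) := by
  have hcomp : g.comp (X + C phi⁻¹) = ∑ k ∈ range N, g.coeff k • (X + C phi⁻¹) ^ k := by
    rw [comp_eq_sum_left, sum_over_range' _ (fun _ => by simp) N hg]
    simp only [C_mul']
  simp only [hcomp, map_sum, map_smul, LinearMap.sum_apply, LinearMap.smul_apply, smul_eq_mul,
    binomMoment_inv_phi_sq, mul_sum]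
  rw [sum_comm]
  exact sum_congr rfl fun j _ => sum_congr rfl fun k _ => by ring

end Golden

/-- If `P` is a nonzero integer-valued polynomial then `∑_{n≥0} |P(n)|² φ^{-2n} ≥ φ`. -/
theorem stmt_1 (P : Polynomial ℝ) (hP : IsIVP P) (hne : P ≠ 0) :
    phi ≤ ∑' n : ℕ, (P.eval (n : ℝ)) ^ 2 / phi ^ (2 * n) := by
  set g := newtonPoly P
  set Q := g.comp (X + C phi⁻¹)
  have hQ : Q.leadingCoeff = g.leadingCoeff := by
    rw [leadingCoeff_comp (by rw [natDegree_X_add_C]; exact one_ne_zero), leadingCoeff_X_add_C,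
      one_pow, mul_one]
  have hseries : ∑' n : ℕ, (P.eval (n : ℝ)) ^ 2 / phi ^ (2 * n) = phi * coeffPairing Q Q := by
    rw [← sum_mul_binomMoment_inv_phi_sq g (Nat.lt_succ_of_le (natDegree_newtonPoly_le P)),
      ← (hasSum_sq_sum_mul_choose_mul_pow abs_inv_phi_sq_lt_one _ _).tsum_eq]
    refine tsum_congr fun n => ?_
    rw [eval_natCast_eq_sum_coeff_newtonPoly_mul_choose, div_eq_mul_inv, pow_mul, inv_pow, inv_pow]
  have hphi : 0 ≤ phi := Real.goldenRatio_pos.le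
  calc phi = phi * 1 := (mul_one phi).symm
    _ ≤ phi * Q.leadingCoeff ^ 2 := by
        gcongr
        exact hQ ▸ hP.one_le_sq_leadingCoeff_newtonPoly hne
    _ ≤ phi * coeffPairing Q Q := by
        gcongr
        exact sq_leadingCoeff_le_coeffPairing_self Q
    _ = _ := hseries.symm
end

section
/- Let P be a polynomial with complex coefficients of degree at most d, written P(x) = ∑_{k=0}^d c_k·binom(x,k). Then for every complex number z with |z| > 1, the series ∑_{n=1}^∞ P(−n)·z^{−n} converges absolutely and ∑_{n=1}^∞ P(−n)·z^{−n} = −(1/(1−z))·∑_{k=0}^d c_k·(z/(1−z))^k. -/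
/-!
Since `binom(-(n+1), k) = (-1)^k C(n+k, k)`, the `k`-th piece of the series is, in `w = z⁻¹`,
`(-1)^k w ∑ C(n+k, k) wⁿ = (-1)^k w / (1 - w)^(k+1)`, which is the stated expression in `z`.
Absolute convergence needs no separate estimate: in the finite-dimensional space `ℂ`,
unconditional summability implies summability of the norms.
-/

/-- The binomial polynomial `binom(x,k) = x(x-1)⋯(x-k+1)/k!` over `ℂ`. -/
noncomputable def binomC (x : ℂ) (k : ℕ) : ℂ :=
  (∏ i ∈ Finset.range k, (x - i)) / (Nat.factorial k : ℂ)

open Finset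

theorem binomC_neg_natCast_add_one (n k : ℕ) :
    binomC (-((n : ℂ) + 1)) k = (-1) ^ k * ((n + k).choose k : ℂ) := by
  have hprod : ∏ i ∈ range k, (-((n : ℂ) + 1) - i) = (-1) ^ k * ((n + 1).ascFactorial k : ℂ) := by
    calc ∏ i ∈ range k, (-((n : ℂ) + 1) - i) = ∏ i ∈ range k, -((n + 1 + i : ℕ) : ℂ) :=
          prod_congr rfl fun i _ => by push_cast; ring
      _ = _ := by rw [prod_neg, card_range, Nat.ascFactorial_eq_prod_range, Nat.cast_prod]
  rw [binomC, hprod, Nat.ascFactorial_eq_factorial_mul_choose]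
  push_cast
  rw [mul_div_assoc, mul_div_cancel_left₀ _ (Nat.cast_ne_zero.mpr k.factorial_ne_zero)]

theorem neg_one_div_one_sub_mul_div_one_sub_pow {K : Type*} [Field K] {z : K} (hz0 : z ≠ 0)
    (hz1 : z ≠ 1) (k : ℕ) :
    -(1 / (1 - z)) * (z / (1 - z)) ^ k = (-1) ^ k * z⁻¹ * (1 / (1 - z⁻¹) ^ (k + 1)) := by
  have h1 : 1 - z ≠ 0 := sub_ne_zero.mpr hz1.symm
  have h2 : 1 - z⁻¹ ≠ 0 := sub_ne_zero.mpr (by simpa [eq_comm] using hz1)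
  have hratio : z / (1 - z) = -1 / (1 - z⁻¹) := by field_simp; ring
  have hfirst : -(1 / (1 - z)) = z⁻¹ / (1 - z⁻¹) := by field_simp; ring
  rw [hratio, hfirst, div_pow, pow_succ]
  field_simp

theorem hasSum_binomC_neg_mul_inv_pow {z : ℂ} (hz : 1 < ‖z‖) (k : ℕ) :
    HasSum (fun n : ℕ => binomC (-((n : ℂ) + 1)) k * (z ^ (n + 1))⁻¹)
      (-(1 / (1 - z)) * (z / (1 - z)) ^ k) := by
  have hz0 : z ≠ 0 := norm_pos_iff.mp (one_pos.trans hz)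
  have hz1 : z ≠ 1 := by rintro rfl; simp at hz
  have hw : ‖z⁻¹‖ < 1 := by rw [norm_inv]; exact inv_lt_one_of_one_lt₀ hz
  rw [neg_one_div_one_sub_mul_div_one_sub_pow hz0 hz1]
  have hterm : (fun n : ℕ => binomC (-((n : ℂ) + 1)) k * (z ^ (n + 1))⁻¹)
      = fun n : ℕ => (-1) ^ k * z⁻¹ * ((n + k).choose k * z⁻¹ ^ n) := by
    ext n
    rw [binomC_neg_natCast_add_one, pow_succ, mul_inv, inv_pow]
    ring
  rw [hterm]
  exact (hasSum_choose_mul_geometric_of_norm_lt_one k hw).mul_left _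

/-- For a complex polynomial `P(x) = ∑_{k=0}^d c_k binom(x,k)` and `|z| > 1`, the series
`∑_{n≥1} P(-n) z^{-n}` converges absolutely, with sum
`-(1/(1-z)) ∑_{k=0}^d c_k (z/(1-z))^k`. -/
theorem stmt_9 (d : ℕ) (c : Fin (d + 1) → ℂ) (z : ℂ) (hz : 1 < ‖z‖) :
    (Summable fun n : ℕ =>
      ‖(∑ k : Fin (d + 1), c k * binomC (-((n : ℂ) + 1)) (k : ℕ)) * (z ^ (n + 1))⁻¹‖) ∧
    (∑' n : ℕ, (∑ k : Fin (d + 1), c k * binomC (-((n : ℂ) + 1)) (k : ℕ)) * (z ^ (n + 1))⁻¹)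
      = -(1 / (1 - z)) * ∑ k : Fin (d + 1), c k * (z / (1 - z)) ^ (k : ℕ) := by
  have hsum : HasSum
      (fun n : ℕ => (∑ k : Fin (d + 1), c k * binomC (-((n : ℂ) + 1)) (k : ℕ)) * (z ^ (n + 1))⁻¹)
      (-(1 / (1 - z)) * ∑ k : Fin (d + 1), c k * (z / (1 - z)) ^ (k : ℕ)) := by
    simp only [sum_mul, mul_sum]
    refine hasSum_sum fun k _ => ?_
    simpa only [mul_assoc, mul_left_comm _ (c k)] using
      (hasSum_binomC_neg_mul_inv_pow hz k).mul_left (c k)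
  exact ⟨hsum.summable.norm, hsum.tsum_eq⟩
end

section
/- Let P be a polynomial with real coefficients of degree at most d, written P(x) = ∑_{k=0}^d c_k·binom(x,k), and define g(z) = (1/(1−z))·∑_{k=0}^d c_k·(z/(1−z))^k for z ∈ ℂ \ {1}. Then for every real r with 0 < r < 1: (1/(2π))·∫₀^{2π} |g(r·e^{iθ})|² dθ = ∑_{n=0}^∞ |P(n)|²·r^{2n}, and for every real r > 1: (1/(2π))·∫₀^{2π} |g(r·e^{iθ})|² dθ = ∑_{n=1}^∞ |P(−n)|²·r^{−2n}. -/
/-- The binomial polynomial `binom(x,k) = x(x-1)⋯(x-k+1)/k!`. -/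
noncomputable def binom (x : ℝ) (k : ℕ) : ℝ :=
  (∏ i ∈ Finset.range k, (x - i)) / (Nat.factorial k)

/-- The polynomial `P_c(x) = ∑_{k=0}^d c_k · binom(x,k)`. -/
noncomputable def Pc {d : ℕ} (c : Fin (d + 1) → ℝ) (x : ℝ) : ℝ :=
  ∑ k : Fin (d + 1), c k * binom x (k : ℕ)

/-!
Since `∑ₙ C(n,k) zⁿ = z^k / (1-z)^(k+1)` for `|z| < 1`, expanding each term of
`g(z) = ∑ₖ c_k z^k / (1-z)^(k+1)` gives `g(z) = ∑ₙ P(n) zⁿ`. For `|z| > 1` the same expansion in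
`w = 1/z` gives `g(z) = -∑ₙ P(-(n+1)) z^(-(n+1))`, because `binom(-(n+1), k) = (-1)^k C(n+k,k)`.
On the circle `|z| = r` either expansion is an absolutely convergent Fourier series in `θ` with
distinct frequencies, so the circle mean of `|g|²` is the sum of the squared moduli of its
coefficients (Parseval, by termwise integration against `e^{-imθ}`).
-/

open Polynomial
open scoped Nat

lemma binom_eq_descPochhammer_eval_div (x : ℝ) (k : ℕ) :
    binom x k = (descPochhammer ℝ k).eval x / k ! := by
  rw [binom, descPochhammer_eval_eq_prod_range]

lemma binom_natCast (n k : ℕ) : binom n k = n.choose k := by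
  rw [binom_eq_descPochhammer_eval_div, Nat.cast_choose_eq_descPochhammer_div]

lemma binom_neg_natCast_sub_one (n k : ℕ) :
    binom (-((n : ℝ) + 1)) k = (-1) ^ k * (n + k).choose k := by
  have hasc : (ascPochhammer ℝ k).eval ((n : ℝ) + 1) = k ! * (n + k).choose k := by
    rw [← Nat.cast_add_one, ← Nat.cast_ascFactorial, Nat.ascFactorial_eq_factorial_mul_choose,
      Nat.cast_mul]
  have hdesc :
      (descPochhammer ℝ k).eval (-((n : ℝ) + 1)) = (-1) ^ k * (k ! * (n + k).choose k) := by
    rw [← hasc, ← neg_neg ((n : ℝ) + 1), ascPochhammer_eval_neg_eq_descPochhammer, neg_neg,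
      ← mul_assoc, ← mul_pow]
    norm_num
  rw [binom_eq_descPochhammer_eval_div, hdesc]
  field_simp

lemma Pc_natCast {d : ℕ} (c : Fin (d + 1) → ℝ) (n : ℕ) :
    Pc c n = ∑ k : Fin (d + 1), c k * n.choose k := by
  simp only [Pc, binom_natCast]

lemma Pc_neg_natCast_sub_one {d : ℕ} (c : Fin (d + 1) → ℝ) (n : ℕ) :
    Pc c (-((n : ℝ) + 1)) = ∑ k : Fin (d + 1), c k * ((-1) ^ (k : ℕ) * (n + k).choose k) := by
  simp only [Pc, binom_neg_natCast_sub_one]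

noncomputable def binomGenFun {d : ℕ} (c : Fin (d + 1) → ℝ) (z : ℂ) : ℂ :=
  (1 / (1 - z)) * ∑ k : Fin (d + 1), (c k : ℂ) * (z / (1 - z)) ^ (k : ℕ)

lemma binomGenFun_eq_sum {d : ℕ} (c : Fin (d + 1) → ℝ) (z : ℂ) :
    binomGenFun c z = ∑ k : Fin (d + 1), (c k : ℂ) * (z ^ (k : ℕ) / (1 - z) ^ ((k : ℕ) + 1)) := by
  rw [binomGenFun, Finset.mul_sum]
  refine Finset.sum_congr rfl fun k _ => ?_
  rw [div_pow, pow_succ, one_div, div_eq_mul_inv, div_eq_mul_inv, mul_inv]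
  ring

lemma hasSum_choose_mul_pow {𝕜 : Type*} [NormedField 𝕜] (k : ℕ) {z : 𝕜} (hz : ‖z‖ < 1) :
    HasSum (fun n => (n.choose k : 𝕜) * z ^ n) (z ^ k / (1 - z) ^ (k + 1)) := by
  rw [← hasSum_nat_add_iff' k]
  have hlow : ∑ i ∈ Finset.range k, (i.choose k : 𝕜) * z ^ i = 0 :=
    Finset.sum_eq_zero fun i hi => by rw [Nat.choose_eq_zero_of_lt (Finset.mem_range.mp hi)]; simp
  have h := (hasSum_choose_mul_geometric_of_norm_lt_one k hz).mul_left (z ^ k)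
  rw [hlow, sub_zero, ← mul_one_div]
  simpa only [pow_add, mul_comm, mul_left_comm, mul_assoc] using h

lemma hasSum_choose_add_mul_pow_succ {𝕜 : Type*} [NormedField 𝕜] (k : ℕ) {w : 𝕜} (hw : ‖w‖ < 1) :
    HasSum (fun n => ((n + k).choose k : 𝕜) * w ^ (n + 1)) (w / (1 - w) ^ (k + 1)) := by
  have h := (hasSum_choose_mul_geometric_of_norm_lt_one k hw).mul_left w
  rw [← mul_one_div]
  simpa only [pow_succ, mul_comm, mul_left_comm, mul_assoc] using h

lemma summable_norm_sum {ι κ E : Type*} [SeminormedAddCommGroup E] (s : Finset κ) {f : κ → ι → E}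
    (hf : ∀ k ∈ s, Summable fun i => ‖f k i‖) : Summable fun i => ‖∑ k ∈ s, f k i‖ :=
  (summable_sum hf).of_nonneg_of_le (fun _ => norm_nonneg _) fun _ => norm_sum_le _ _

lemma pow_div_one_sub_pow_succ_eq_neg_one_pow_mul_inv {K : Type*} [Field K] {z : K} (hz₀ : z ≠ 0)
    (hz₁ : z ≠ 1) (k : ℕ) :
    z ^ k / (1 - z) ^ (k + 1) = (-1) ^ (k + 1) * (z⁻¹ / (1 - z⁻¹) ^ (k + 1)) := by
  have h₁ : 1 - z ≠ 0 := sub_ne_zero.mpr hz₁.symm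
  have h₂ : z - 1 ≠ 0 := sub_ne_zero.mpr hz₁
  rw [show 1 - z⁻¹ = (z - 1) / z by field_simp, show 1 - z = -(z - 1) by ring, neg_pow, div_pow,
    pow_succ z k]
  field_simp
  rw [← pow_mul, mul_comm, pow_mul, neg_one_sq, one_pow]

lemma ofReal_Pc_natCast_mul_pow_eq_sum {d : ℕ} (c : Fin (d + 1) → ℝ) (n : ℕ) (z : ℂ) :
    (Pc c n : ℂ) * z ^ n = ∑ k : Fin (d + 1), (c k : ℂ) * ((n.choose k : ℂ) * z ^ n) := by
  rw [Pc_natCast, Complex.ofReal_sum, Finset.sum_mul]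
  push_cast
  exact Finset.sum_congr rfl fun k _ => by ring

lemma neg_ofReal_Pc_neg_mul_zpow_eq_sum {d : ℕ} (c : Fin (d + 1) → ℝ) (n : ℕ) (z : ℂ) :
    -(Pc c (-((n : ℝ) + 1)) : ℂ) * z ^ (-((n : ℤ) + 1)) =
      ∑ k : Fin (d + 1),
        (c k : ℂ) * (-1) ^ ((k : ℕ) + 1) * (((n + k).choose k : ℂ) * z⁻¹ ^ (n + 1)) := by
  rw [Pc_neg_natCast_sub_one, Complex.ofReal_sum, ← Finset.sum_neg_distrib, Finset.sum_mul,
    zpow_neg, ← Nat.cast_add_one, zpow_natCast, ← inv_pow]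
  push_cast
  exact Finset.sum_congr rfl fun k _ => by ring

theorem hasSum_Pc_mul_pow {d : ℕ} (c : Fin (d + 1) → ℝ) {z : ℂ} (hz : ‖z‖ < 1) :
    HasSum (fun n : ℕ => (Pc c n : ℂ) * z ^ n) (binomGenFun c z) := by
  simp only [ofReal_Pc_natCast_mul_pow_eq_sum, binomGenFun_eq_sum]
  exact hasSum_sum fun k _ => (hasSum_choose_mul_pow k hz).mul_left _

theorem summable_norm_Pc_mul_pow {d : ℕ} (c : Fin (d + 1) → ℝ) {z : ℂ} (hz : ‖z‖ < 1) :
    Summable fun n : ℕ => ‖(Pc c n : ℂ) * z ^ n‖ := by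
  simp only [ofReal_Pc_natCast_mul_pow_eq_sum]
  refine summable_norm_sum _ fun k _ => ?_
  have hz' : ‖‖z‖‖ < 1 := by rwa [norm_norm]
  refine ((hasSum_choose_mul_pow k hz').summable.mul_left ‖(c k : ℂ)‖).congr fun n => ?_
  simp [norm_pow]

theorem hasSum_neg_Pc_neg_mul_zpow {d : ℕ} (c : Fin (d + 1) → ℝ) {z : ℂ} (hz : 1 < ‖z‖) :
    HasSum (fun n : ℕ => -(Pc c (-((n : ℝ) + 1)) : ℂ) * z ^ (-((n : ℤ) + 1)))
      (binomGenFun c z) := by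
  have hz₀ : z ≠ 0 := by rintro rfl; norm_num at hz
  have hz₁ : z ≠ 1 := by rintro rfl; norm_num at hz
  have hw : ‖z⁻¹‖ < 1 := by rwa [norm_inv, inv_lt_one₀ (one_pos.trans hz)]
  simp only [neg_ofReal_Pc_neg_mul_zpow_eq_sum, binomGenFun_eq_sum]
  refine hasSum_sum fun k _ => ?_
  rw [pow_div_one_sub_pow_succ_eq_neg_one_pow_mul_inv hz₀ hz₁, ← mul_assoc]
  exact (hasSum_choose_add_mul_pow_succ k hw).mul_left _

theorem summable_norm_neg_Pc_neg_mul_zpow {d : ℕ} (c : Fin (d + 1) → ℝ) {z : ℂ} (hz : 1 < ‖z‖) :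
    Summable fun n : ℕ => ‖-(Pc c (-((n : ℝ) + 1)) : ℂ) * z ^ (-((n : ℤ) + 1))‖ := by
  simp only [neg_ofReal_Pc_neg_mul_zpow_eq_sum]
  refine summable_norm_sum _ fun k _ => ?_
  have hw : ‖‖z⁻¹‖‖ < 1 := by rwa [norm_norm, norm_inv, inv_lt_one₀ (one_pos.trans hz)]
  refine ((hasSum_choose_add_mul_pow_succ k hw).summable.mul_left
    ‖(c k : ℂ) * (-1) ^ ((k : ℕ) + 1)‖).congr fun n => ?_
  simp [norm_pow]

open Complex MeasureTheory
open scoped Real ComplexConjugate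

lemma integral_exp_int_mul_mul_I (m : ℤ) :
    ∫ θ in (0 : ℝ)..2 * π, exp (m * θ * I) = if m = 0 then (2 * π : ℂ) else 0 := by
  split_ifs with hm
  · simp [hm]
  · have hc : (m : ℂ) * I ≠ 0 := mul_ne_zero (Int.cast_ne_zero.mpr hm) I_ne_zero
    simp_rw [mul_right_comm _ _ I]
    rw [integral_exp_mul_complex hc, div_eq_zero_iff, sub_eq_zero]
    left
    rw [show (m : ℂ) * I * ((2 * π : ℝ) : ℂ) = m * (2 * π * I) by push_cast; ring,
      exp_int_mul_two_pi_mul_I, ofReal_zero, mul_zero, exp_zero]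

theorem hasSum_intervalIntegral_mul_of_norm_le {ι : Type*} [Countable ι] {b : ι → ℂ}
    (hb : Summable (‖b ·‖)) {ψ : ι → ℝ → ℂ} (hψ : ∀ i, Continuous (ψ i)) {C : ℝ}
    (hC : ∀ i t, ‖ψ i t‖ ≤ C) (α β : ℝ) :
    HasSum (fun i => b i * ∫ t in α..β, ψ i t) (∫ t in α..β, ∑' i, b i * ψ i t) := by
  have hbound : ∀ i t, ‖b i * ψ i t‖ ≤ ‖b i‖ * C := fun i t => by
    rw [norm_mul]; exact mul_le_mul_of_nonneg_left (hC i t) (norm_nonneg _)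
  simp_rw [← intervalIntegral.integral_const_mul]
  refine intervalIntegral.hasSum_integral_of_dominated_convergence (fun i _ => ‖b i‖ * C)
    (fun i => ((continuous_const.mul (hψ i)).aestronglyMeasurable))
    (fun i => ae_of_all _ fun t _ => hbound i t) (ae_of_all _ fun _ _ => hb.mul_right C)
    intervalIntegrable_const (ae_of_all _ fun t _ => ?_)
  exact ((hb.mul_right C).of_norm_bounded fun i => hbound i t).hasSum

theorem integral_tsum_mul_exp_mul_exp_neg {ι : Type*} [Countable ι] {a : ι → ℂ}
    (ha : Summable (‖a ·‖)) {e : ι → ℤ} (he : Function.Injective e) (j : ι) :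
    ∫ θ in (0 : ℝ)..2 * π, (∑' i, a i * exp (e i * θ * I)) * exp (-(e j * θ * I)) =
      2 * π * a j := by
  classical
  have hsum := hasSum_intervalIntegral_mul_of_norm_le ha
    (ψ := fun i θ => exp (((e i - e j : ℤ) : ℂ) * θ * I)) (C := 1) (fun i => by fun_prop)
    (fun i θ => by simp [norm_exp]) 0 (2 * π)
  have hint : ∀ i, ∫ θ in (0 : ℝ)..2 * π, exp (((e i - e j : ℤ) : ℂ) * θ * I) =
      if i = j then (2 * π : ℂ) else 0 := fun i => by
    simp only [integral_exp_int_mul_mul_I, sub_eq_zero, he.eq_iff]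
  have hprod : ∀ θ : ℝ, (∑' i, a i * exp (e i * θ * I)) * exp (-(e j * θ * I)) =
      ∑' i, a i * exp (((e i - e j : ℤ) : ℂ) * θ * I) := fun θ => by
    rw [← tsum_mul_right]
    refine tsum_congr fun i => ?_
    rw [mul_assoc, ← exp_add]
    push_cast; ring_nf
  simp only [hint, mul_ite, mul_zero] at hsum
  simp_rw [hprod]
  rw [← hsum.tsum_eq, tsum_ite_eq, mul_comm]

theorem integral_norm_tsum_mul_exp_sq {ι : Type*} [Countable ι] {a : ι → ℂ}
    (ha : Summable (‖a ·‖)) {e : ι → ℤ} (he : Function.Injective e) :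
    ∫ θ in (0 : ℝ)..2 * π, ‖∑' i, a i * exp (e i * θ * I)‖ ^ 2 = 2 * π * ∑' i, ‖a i‖ ^ 2 := by
  set f : ℝ → ℂ := fun θ => ∑' i, a i * exp (e i * θ * I)
  have hterm : ∀ i (θ : ℝ), ‖a i * exp (e i * θ * I)‖ = ‖a i‖ := fun i θ => by
    simp [norm_exp]
  have hf_cont : Continuous f :=
    continuous_tsum (fun i => by fun_prop) ha fun i θ => (hterm i θ).le
  have hf_bound : ∀ θ, ‖f θ‖ ≤ ∑' i, ‖a i‖ := fun θ => by
    simpa only [hterm] using norm_tsum_le_tsum_norm (ha.congr fun i => (hterm i θ).symm)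
  have hconj : ∀ θ : ℝ, conj (f θ) * f θ = ∑' i, conj (a i) * (f θ * exp (-(e i * θ * I))) :=
    fun θ => by
      rw [conj_tsum, ← tsum_mul_right]
      refine tsum_congr fun i => ?_
      rw [map_mul, ← exp_conj]
      simp only [map_mul, conj_ofReal, map_intCast, conj_I]
      ring_nf
  have hsum := hasSum_intervalIntegral_mul_of_norm_le (b := fun i => conj (a i))
    (by simpa using ha) (ψ := fun i θ => f θ * exp (-(e i * θ * I))) (fun i => by fun_prop)
    (fun i θ => by simpa [norm_exp] using hf_bound θ) 0 (2 * π)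
  have hcoef : ∀ i, ∫ θ in (0 : ℝ)..2 * π, f θ * exp (-(e i * θ * I)) = 2 * π * a i :=
    integral_tsum_mul_exp_mul_exp_neg ha he
  simp only [hcoef] at hsum
  have hc : ((∫ θ in (0 : ℝ)..2 * π, ‖f θ‖ ^ 2 : ℝ) : ℂ) = ((2 * π * ∑' i, ‖a i‖ ^ 2 : ℝ) : ℂ) := by
    rw [← intervalIntegral.integral_ofReal]
    simp_rw [ofReal_pow, ← conj_mul', hconj, ← hsum.tsum_eq]
    rw [ofReal_mul, ofReal_tsum, ← tsum_mul_left]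
    refine tsum_congr fun i => ?_
    rw [mul_left_comm, conj_mul']
    push_cast; rfl
  exact ofReal_injective hc

theorem integral_norm_circle_sq_of_hasSum_zpow {ι : Type*} [Countable ι] {b : ι → ℂ} {e : ι → ℤ}
    (he : Function.Injective e) {r : ℝ} (hb : Summable fun i => ‖b i * (r : ℂ) ^ e i‖)
    {F : ℂ → ℂ}
    (hF : ∀ θ : ℝ, HasSum (fun i => b i * (r * exp (θ * I)) ^ e i) (F (r * exp (θ * I)))) :
    ∫ θ in (0 : ℝ)..2 * π, ‖F (r * exp (θ * I))‖ ^ 2 = 2 * π * ∑' i, ‖b i * (r : ℂ) ^ e i‖ ^ 2 := by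
  have hterm : ∀ i (θ : ℝ),
      b i * (r * exp (θ * I)) ^ e i = b i * (r : ℂ) ^ e i * exp (e i * θ * I) :=
    fun i θ => by rw [mul_zpow, ← exp_int_mul, mul_assoc, mul_assoc]
  simp_rw [← (hF _).tsum_eq, hterm]
  exact integral_norm_tsum_mul_exp_sq hb he

lemma norm_ofReal_mul_exp_mul_I {r : ℝ} (hr : 0 ≤ r) (θ : ℝ) : ‖(r : ℂ) * exp (θ * I)‖ = r := by
  rw [norm_mul, norm_exp_ofReal_mul_I, mul_one, norm_real, Real.norm_of_nonneg hr]

theorem integral_norm_binomGenFun_sq_of_lt_one {d : ℕ} (c : Fin (d + 1) → ℝ) {r : ℝ} (hr₀ : 0 < r)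
    (hr₁ : r < 1) :
    ∫ θ in (0 : ℝ)..2 * π, ‖binomGenFun c (r * exp (θ * I))‖ ^ 2 =
      2 * π * ∑' n : ℕ, Pc c n ^ 2 * r ^ (2 * n) := by
  have hF : ∀ θ : ℝ, HasSum (fun n : ℕ => (Pc c n : ℂ) * (r * exp (θ * I)) ^ (n : ℤ))
      (binomGenFun c (r * exp (θ * I))) := fun θ => by
    simpa only [zpow_natCast] using
      hasSum_Pc_mul_pow c (by rwa [norm_ofReal_mul_exp_mul_I hr₀.le] : ‖(r : ℂ) * exp (θ * I)‖ < 1)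
  have hb : Summable fun n : ℕ => ‖(Pc c n : ℂ) * (r : ℂ) ^ (n : ℤ)‖ := by
    simpa only [zpow_natCast] using summable_norm_Pc_mul_pow c (z := r) (by simpa [abs_of_pos hr₀])
  rw [integral_norm_circle_sq_of_hasSum_zpow Nat.cast_injective hb hF]
  congr 1
  refine tsum_congr fun n => ?_
  rw [zpow_natCast, norm_mul, norm_pow, norm_real, norm_real, Real.norm_eq_abs,
    Real.norm_of_nonneg hr₀.le, mul_pow, sq_abs, ← pow_mul, mul_comm n 2]

theorem integral_norm_binomGenFun_sq_of_one_lt {d : ℕ} (c : Fin (d + 1) → ℝ) {r : ℝ} (hr : 1 < r) :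
    ∫ θ in (0 : ℝ)..2 * π, ‖binomGenFun c (r * exp (θ * I))‖ ^ 2 =
      2 * π * ∑' n : ℕ, Pc c (-((n : ℝ) + 1)) ^ 2 / r ^ (2 * (n + 1)) := by
  have hr₀ : 0 < r := one_pos.trans hr
  have hF : ∀ θ : ℝ, HasSum
      (fun n : ℕ => -(Pc c (-((n : ℝ) + 1)) : ℂ) * (r * exp (θ * I)) ^ (-((n : ℤ) + 1)))
      (binomGenFun c (r * exp (θ * I))) := fun θ =>
    hasSum_neg_Pc_neg_mul_zpow c (by rwa [norm_ofReal_mul_exp_mul_I hr₀.le])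
  have hb := summable_norm_neg_Pc_neg_mul_zpow c (z := r) (by simpa [abs_of_pos hr₀])
  rw [integral_norm_circle_sq_of_hasSum_zpow (fun m n h => by simpa using h) hb hF]
  congr 1
  refine tsum_congr fun n => ?_
  rw [norm_mul, norm_neg, norm_zpow, norm_real, norm_real, Real.norm_eq_abs,
    Real.norm_of_nonneg hr₀.le, zpow_neg, mul_pow, sq_abs, inv_pow, div_eq_mul_inv, pow_mul']
  norm_cast

/-- Circle means of the (analytically continued) generating function
`g(z) = (1/(1-z)) ∑_k c_k (z/(1-z))^k`:
for `0 < r < 1` they recover `∑_{n≥0} P(n)² r^{2n}`, and for `r > 1` they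
recover `∑_{n≥1} P(-n)² r^{-2n}`. -/
theorem stmt_10 (d : ℕ) (c : Fin (d + 1) → ℝ) (g : ℂ → ℂ)
    (hg : ∀ z : ℂ, z ≠ 1 →
      g z = (1 / (1 - z)) * ∑ k : Fin (d + 1), (c k : ℂ) * (z / (1 - z)) ^ (k : ℕ)) :
    (∀ r : ℝ, 0 < r → r < 1 →
      (1 / (2 * Real.pi)) *
          ∫ θ in (0 : ℝ)..(2 * Real.pi),
            ‖g ((r : ℂ) * Complex.exp ((θ : ℂ) * Complex.I))‖ ^ 2
        = ∑' n : ℕ, (Pc c (n : ℝ)) ^ 2 * r ^ (2 * n)) ∧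
    (∀ r : ℝ, 1 < r →
      (1 / (2 * Real.pi)) *
          ∫ θ in (0 : ℝ)..(2 * Real.pi),
            ‖g ((r : ℂ) * Complex.exp ((θ : ℂ) * Complex.I))‖ ^ 2
        = ∑' n : ℕ, (Pc c (-((n : ℝ) + 1))) ^ 2 / r ^ (2 * (n + 1))) := by
  have hg_circle : ∀ r : ℝ, 0 < r → r ≠ 1 → ∀ θ : ℝ,
      g (r * exp (θ * I)) = binomGenFun c (r * exp (θ * I)) := fun r hr₀ hr₁ θ =>
    hg _ fun h => hr₁ (by simpa [h] using (norm_ofReal_mul_exp_mul_I hr₀.le θ).symm)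
  refine ⟨fun r hr₀ hr₁ => ?_, fun r hr => ?_⟩
  · simp_rw [hg_circle r hr₀ hr₁.ne, integral_norm_binomGenFun_sq_of_lt_one c hr₀ hr₁]
    field_simp
  · simp_rw [hg_circle r (one_pos.trans hr) hr.ne', integral_norm_binomGenFun_sq_of_one_lt c hr]
    field_simp
end

section
/- Let μ be a Borel measure on ℂ with infinite support such that ∫ |z|^m dμ(z) < ∞ for every m ∈ ℕ. For n ∈ ℕ let M(n;μ) be the (n+1)×(n+1) complex matrix with entries M_{j,k} = ∫ z^j·conj(z)^k dμ(z) for j,k ∈ {0,…,n}. Then det M(n;μ) = ∏_{j=0}^n m_j(μ), where m_j(μ) = inf{ ∫ |p(z)|² dμ(z) : p a monic complex polynomial of degree j }; in particular each m_j(μ) > 0 and det M(n;μ) > 0. -/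
open MeasureTheory

/-- The squared `L²(μ)`-norm of the monic orthogonal polynomial of degree `j` w.r.t. `μ`:
the infimum of `∫ |p|² dμ` over monic complex polynomials `p` of degree `j`. -/
noncomputable def minMonicNorm (μ : Measure ℂ) (j : ℕ) : ℝ :=
  sInf {I : ℝ | ∃ p : Polynomial ℂ, p.Monic ∧ p.natDegree = j ∧
    I = ∫ z, ‖p.eval z‖ ^ 2 ∂μ}

/-!
Let `v₀, …, vₙ` be the monomials `zʲ` viewed in `L²(μ)`, so that `M` is the transpose of their
Gram matrix. Writing `vⱼ = gⱼ + ∑_{i<j} cᵢⱼ gᵢ` with `g` the Gram–Schmidt orthogonalisation of `v`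
factors the Gram matrix as `Cᴴ · diag(‖gᵢ‖²) · C` with `C` unitriangular, so its determinant is
`∏ ‖gᵢ‖²`. Since `gⱼ` is `vⱼ` minus its orthogonal projection onto `span {vᵢ | i < j}`, it is the
shortest vector of the form `vⱼ + (lower monomials)`, i.e. `‖gⱼ‖² = mⱼ(μ)`. The minimum is
attained by a monic polynomial, which cannot vanish in `L²(μ)` because it has finitely many roots
while the support of `μ` is infinite; hence `mⱼ(μ) > 0`.
-/

open Polynomial InnerProductSpace Submodule Matrix

namespace Matrix

variable {𝕜 E ι κ : Type*} [RCLike 𝕜] [NormedAddCommGroup E] [InnerProductSpace 𝕜 E]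

theorem gram_eq_conjTranspose_mul_gram_mul [Fintype κ] {f : ι → E} {g : κ → E}
    (B : Matrix κ ι 𝕜) (hf : ∀ j, ∑ i, B i j • g i = f j) :
    gram 𝕜 f = Bᴴ * gram 𝕜 g * B := by
  ext j k
  simp only [gram_apply, ← hf, sum_inner, inner_sum, inner_smul_left, inner_smul_right,
    mul_apply, conjTranspose_apply, RCLike.star_def, Finset.mul_sum, Finset.sum_mul]
  refine Finset.sum_congr rfl fun i _ => Finset.sum_congr rfl fun l _ => by ring

theorem gram_eq_diagonal [DecidableEq ι] {g : ι → E} (hg : Pairwise fun i j => ⟪g i, g j⟫_𝕜 = 0) :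
    gram 𝕜 g = diagonal fun i => (‖g i‖ : 𝕜) ^ 2 := by
  ext i j
  rcases eq_or_ne i j with rfl | hij
  · simp [gram_apply, inner_self_eq_norm_sq_to_K]
  · simp [gram_apply, hg hij, hij]

end Matrix

namespace InnerProductSpace

variable (𝕜 : Type*) {E ι : Type*} [RCLike 𝕜] [NormedAddCommGroup E] [InnerProductSpace 𝕜 E]
  [LinearOrder ι] [LocallyFiniteOrderBot ι] [WellFoundedLT ι]

theorem sub_gramSchmidt_mem_span (f : ι → E) (j : ι) :
    f j - gramSchmidt 𝕜 f j ∈ span 𝕜 (f '' Set.Iio j) := by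
  rw [← span_gramSchmidt_Iio 𝕜 f j]
  nth_rewrite 1 [gramSchmidt_def'' 𝕜 f j]
  rw [add_sub_cancel_left]
  exact sum_mem fun i hi => smul_mem _ _ (subset_span ⟨i, Finset.mem_Iio.1 hi, rfl⟩)

theorem inner_gramSchmidt_eq_zero_of_mem_span (f : ι → E) {j : ι} {u : E}
    (hu : u ∈ span 𝕜 (f '' Set.Iio j)) : ⟪gramSchmidt 𝕜 f j, u⟫_𝕜 = 0 := by
  have hle : span 𝕜 (f '' Set.Iio j) ≤ (𝕜 ∙ gramSchmidt 𝕜 f j)ᗮ := by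
    rw [span_le]
    rintro _ ⟨i, hi, rfl⟩
    exact mem_orthogonal_singleton_iff_inner_right.2 (gramSchmidt_inv_triangular 𝕜 f hi)
  exact mem_orthogonal_singleton_iff_inner_right.1 (hle hu)

theorem isLeast_norm_sq_gramSchmidt (f : ι → E) (j : ι) :
    IsLeast ((fun u => ‖f j + u‖ ^ 2) '' span 𝕜 (f '' Set.Iio j))
      (‖gramSchmidt 𝕜 f j‖ ^ 2) := by
  refine ⟨⟨gramSchmidt 𝕜 f j - f j, ?_, by simp⟩, ?_⟩
  · rw [SetLike.mem_coe, ← neg_mem_iff, neg_sub]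
    exact sub_gramSchmidt_mem_span 𝕜 f j
  · rintro _ ⟨u, hu, rfl⟩
    set w := f j - gramSchmidt 𝕜 f j + u
    have horth : ⟪gramSchmidt 𝕜 f j, w⟫_𝕜 = 0 :=
      inner_gramSchmidt_eq_zero_of_mem_span 𝕜 f (add_mem (sub_gramSchmidt_mem_span 𝕜 f j) hu)
    calc ‖gramSchmidt 𝕜 f j‖ ^ 2 ≤ ‖gramSchmidt 𝕜 f j‖ ^ 2 + ‖w‖ ^ 2 :=
          le_add_of_nonneg_right (sq_nonneg _)
      _ = ‖gramSchmidt 𝕜 f j + w‖ ^ 2 := by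
        simp only [sq, norm_add_sq_eq_norm_sq_add_norm_sq_of_inner_eq_zero _ _ horth]
      _ = ‖f j + u‖ ^ 2 := by
        congr 2
        simp only [w]
        abel

-- Entry `(i, j)` is the coefficient of `gramSchmidt 𝕜 f i` in `f j` (see `gramSchmidt_def''`).
-- The diagonal is set to `1` directly: the quotient would be `0 / 0` where `gramSchmidt 𝕜 f j = 0`.
noncomputable def gramSchmidtCoeff (f : ι → E) : Matrix ι ι 𝕜 :=
  Matrix.of fun i j => if i = j then 1 else if i < j then
    ⟪gramSchmidt 𝕜 f i, f j⟫_𝕜 / (‖gramSchmidt 𝕜 f i‖ : 𝕜) ^ 2 else 0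

theorem sum_gramSchmidtCoeff_smul [Fintype ι] (f : ι → E) (j : ι) :
    ∑ i, gramSchmidtCoeff 𝕜 f i j • gramSchmidt 𝕜 f i = f j := by
  conv_rhs => rw [gramSchmidt_def'' 𝕜 f j]
  simp only [gramSchmidtCoeff, of_apply, ite_smul, one_smul, zero_smul, Finset.sum_ite,
    Finset.filter_ne', Finset.sum_const_zero, add_zero]
  congr 1
  · simp [Finset.filter_eq']
  · congr 1
    ext i
    simpa using fun h : i < j => h.ne

theorem det_gramSchmidtCoeff [Fintype ι] (f : ι → E) : (gramSchmidtCoeff 𝕜 f).det = 1 := by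
  have htri : (gramSchmidtCoeff 𝕜 f).IsUpperTriangular := fun i j (hji : j < i) => by
    simp [gramSchmidtCoeff, hji.ne', not_lt_of_gt hji]
  rw [det_of_isUpperTriangular htri]
  simp [gramSchmidtCoeff]

theorem det_gram_eq_prod_norm_sq_gramSchmidt [Fintype ι] (f : ι → E) :
    (gram 𝕜 f).det = ∏ i, (‖gramSchmidt 𝕜 f i‖ : 𝕜) ^ 2 := by
  rw [gram_eq_conjTranspose_mul_gram_mul _ (sum_gramSchmidtCoeff_smul 𝕜 f),
    gram_eq_diagonal (gramSchmidt_pairwise_orthogonal 𝕜 f), det_mul, det_mul, det_conjTranspose,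
    det_gramSchmidtCoeff, det_diagonal]
  simp

end InnerProductSpace

namespace Polynomial

theorem monic_and_natDegree_eq_iff {R : Type*} [Ring R] [Nontrivial R] {p : R[X]} {j : ℕ} :
    p.Monic ∧ p.natDegree = j ↔ p - X ^ j ∈ degreeLT R j := by
  rw [mem_degreeLT]
  constructor
  · rintro ⟨hmonic, rfl⟩
    have hdeg : p.degree = p.natDegree := degree_eq_natDegree hmonic.ne_zero
    simpa [hdeg] using degree_sub_lt_left (q := X ^ p.natDegree) (by simp [hdeg])
      hmonic.ne_zero (by simp [hmonic.leadingCoeff])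
  · intro h
    rw [← add_sub_cancel (X ^ j) p]
    exact ⟨monic_X_pow_add h, by
      rw [natDegree_add_eq_left_of_degree_lt (by simpa using h), natDegree_X_pow]⟩

variable {μ : Measure ℂ}

theorem memLp_two_eval (hμ : ∀ m : ℕ, Integrable (fun z : ℂ => ‖z‖ ^ m) μ) (p : ℂ[X]) :
    MemLp (fun z => p.eval z) 2 μ := by
  induction p using Polynomial.induction_on' with
  | add p q hp hq =>
    simp only [eval_add]
    exact hp.add hq
  | monomial i c =>
    simp only [eval_monomial]
    refine MemLp.const_mul ?_ c
    rw [memLp_two_iff_integrable_sq_norm (by fun_prop)]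
    simpa [← pow_mul, mul_comm] using hμ (2 * i)

noncomputable def toL2 (hμ : ∀ m : ℕ, Integrable (fun z : ℂ => ‖z‖ ^ m) μ) :
    ℂ[X] →ₗ[ℂ] Lp ℂ 2 μ where
  toFun p := (memLp_two_eval hμ p).toLp _
  map_add' p q := by
    rw [← MemLp.toLp_add]
    exact MemLp.toLp_congr _ _ (ae_of_all _ fun z => eval_add)
  map_smul' c p := by
    rw [RingHom.id_apply, ← MemLp.toLp_const_smul]
    exact MemLp.toLp_congr _ _ (ae_of_all _ fun z => eval_smul ..)

variable (hμ : ∀ m : ℕ, Integrable (fun z : ℂ => ‖z‖ ^ m) μ)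
include hμ

theorem coeFn_toL2 (p : ℂ[X]) : toL2 hμ p =ᵐ[μ] fun z => p.eval z :=
  (memLp_two_eval hμ p).coeFn_toLp

theorem inner_toL2 (p q : ℂ[X]) :
    ⟪toL2 hμ p, toL2 hμ q⟫_ℂ = ∫ z, starRingEnd ℂ (p.eval z) * q.eval z ∂μ := by
  rw [L2.inner_def]
  refine integral_congr_ae ?_
  filter_upwards [coeFn_toL2 hμ p, coeFn_toL2 hμ q] with z hp hq
  rw [hp, hq, RCLike.inner_apply, mul_comm]

theorem norm_toL2_sq (p : ℂ[X]) : ‖toL2 hμ p‖ ^ 2 = ∫ z, ‖p.eval z‖ ^ 2 ∂μ := by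
  have h := inner_self_eq_norm_sq_to_K (𝕜 := ℂ) (toL2 hμ p)
  simp_rw [inner_toL2, Complex.conj_mul', ← Complex.ofReal_pow, integral_complex_ofReal] at h
  exact Complex.ofReal_injective (by push_cast; exact h.symm)

theorem toL2_injective (hsupp : μ.support.Infinite) : Function.Injective (toL2 hμ) := by
  refine (injective_iff_map_eq_zero _).2 fun p hp => p.eq_zero_of_infinite_isRoot ?_
  have hae : ∀ᵐ z ∂μ, p.eval z = 0 := by
    filter_upwards [coeFn_toL2 hμ p, Lp.coeFn_zero ℂ 2 μ] with z h h0
    rw [← h, hp, h0, Pi.zero_apply]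
  refine hsupp.mono fun z hz => ?_
  by_contra hroot
  exact Measure.subset_compl_support_of_isOpen (isOpen_ne_fun p.continuous continuous_const)
    (ae_iff.1 hae) hroot hz

theorem span_toL2_X_pow (j : ℕ) :
    span ℂ ((fun i : ℕ => toL2 hμ (X ^ i)) '' Set.Iio j) = (degreeLT ℂ j).map (toL2 hμ) := by
  classical
  rw [degreeLT_eq_span_X_pow, map_span, Finset.coe_image, Finset.coe_range, Set.image_image]

theorem integral_norm_sq_eval_pos (hsupp : μ.support.Infinite) {p : ℂ[X]} (hp : p ≠ 0) :
    0 < ∫ z, ‖p.eval z‖ ^ 2 ∂μ := by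
  rw [← norm_toL2_sq hμ]
  exact pow_pos (norm_pos_iff.2 ((map_ne_zero_iff _ (toL2_injective hμ hsupp)).2 hp)) 2

theorem isLeast_integral_norm_sq_monic {n : ℕ} (j : Fin (n + 1)) :
    IsLeast {I : ℝ | ∃ p : ℂ[X], p.Monic ∧ p.natDegree = j ∧ I = ∫ z, ‖p.eval z‖ ^ 2 ∂μ}
      (‖gramSchmidt ℂ (fun i : Fin (n + 1) => toL2 hμ (X ^ (i : ℕ))) j‖ ^ 2) := by
  convert isLeast_norm_sq_gramSchmidt ℂ (fun i : Fin (n + 1) => toL2 hμ (X ^ (i : ℕ))) j using 1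
  have himage : (fun i : Fin (n + 1) => toL2 hμ (X ^ (i : ℕ))) '' Set.Iio j =
      (fun i : ℕ => toL2 hμ (X ^ i)) '' Set.Iio (j : ℕ) := by
    rw [← Fin.image_val_Iio, Set.image_image]
  rw [himage, span_toL2_X_pow]
  ext I
  simp only [Set.mem_ofPred_eq, Set.mem_image]
  constructor
  · rintro ⟨p, hp, hdeg, rfl⟩
    refine ⟨_, ⟨p - X ^ (j : ℕ), monic_and_natDegree_eq_iff.1 ⟨hp, hdeg⟩, rfl⟩, ?_⟩
    rw [← map_add, add_sub_cancel, norm_toL2_sq]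
  · rintro ⟨_, ⟨r, hr, rfl⟩, rfl⟩
    obtain ⟨hmonic, hdeg⟩ := monic_and_natDegree_eq_iff.2 (by rwa [add_sub_cancel_left])
    exact ⟨X ^ (j : ℕ) + r, hmonic, hdeg, by rw [← norm_toL2_sq hμ, map_add]⟩

end Polynomial

/-- For a measure `μ` on `ℂ` with infinite support and all moments finite, the determinant
of the moment matrix `M_{j,k} = ∫ z^j conj(z)^k dμ` equals `∏_{j=0}^n m_j(μ)`, where
`m_j(μ)` is the least squared `L²(μ)`-norm of a monic polynomial of degree `j`; in
particular each `m_j(μ) > 0` and the determinant is positive. -/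
theorem stmt_13 (μ : Measure ℂ)
    (hsupp : {x : ℂ | ∀ U ∈ nhds x, 0 < μ U}.Infinite)
    (hmom : ∀ m : ℕ, (∫⁻ z, ENNReal.ofReal (‖z‖ ^ m) ∂μ) < ⊤)
    (n : ℕ) (M : Matrix (Fin (n + 1)) (Fin (n + 1)) ℂ)
    (hM : ∀ j k : Fin (n + 1),
      M j k = ∫ z, z ^ (j : ℕ) * (starRingEnd ℂ z) ^ (k : ℕ) ∂μ) :
    (∀ j : Fin (n + 1), 0 < minMonicNorm μ (j : ℕ)) ∧
    M.det = ∏ j : Fin (n + 1), ((minMonicNorm μ (j : ℕ) : ℝ) : ℂ) ∧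
    0 < ∏ j : Fin (n + 1), minMonicNorm μ (j : ℕ) := by
  have hμ (m : ℕ) : Integrable (fun z : ℂ => ‖z‖ ^ m) μ :=
    (lintegral_ofReal_ne_top_iff_integrable (by fun_prop) (ae_of_all _ fun z => by positivity)).1
      (hmom m).ne
  have hsupport : μ.support.Infinite := by
    simpa only [← Measure.mem_support_iff_forall, Set.ofPred_mem_eq] using hsupp
  set f : Fin (n + 1) → Lp ℂ 2 μ := fun i => toL2 hμ (X ^ (i : ℕ))
  have hmin (j : Fin (n + 1)) : minMonicNorm μ j = ‖gramSchmidt ℂ f j‖ ^ 2 :=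
    (isLeast_integral_norm_sq_monic hμ j).csInf_eq
  have hpos (j : Fin (n + 1)) : 0 < minMonicNorm μ j := by
    obtain ⟨p, hp, -, hI⟩ := (isLeast_integral_norm_sq_monic hμ j).1
    rw [hmin, hI]
    exact integral_norm_sq_eval_pos hμ hsupport hp.ne_zero
  have hMgram : M = (gram ℂ f)ᵀ := by
    ext j k
    simp [hM, gram_apply, f, inner_toL2, mul_comm]
  refine ⟨hpos, ?_, Finset.prod_pos fun j _ => hpos j⟩
  rw [hMgram, det_transpose, det_gram_eq_prod_norm_sq_gramSchmidt]
  simp [hmin]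
end

section
/- For every real A > 1 there exists a constant C_A > 1 such that: for every d ≥ 1 and every real polynomial P of degree d, if |P(n)| ≤ A^n for every integer n with 0 ≤ n ≤ C_A·d, then |P(n)| ≤ A^n for every natural number n. -/
/-!
Newton's forward-difference formula writes `P(n) = ∑_{k ≤ d} (n choose k) Δᵏ P(0)`, and
`Δᵏ P(0) = ∑_{i ≤ k} ± (k choose i) P(i)` is at most `(A + 1)ᵏ` in absolute value as soon as
`|P(i)| ≤ Aⁱ` for `i ≤ d`. With `λ = log A / 2`, `B = (A + 1) / λ` and
`(n choose k) ≤ nᵏ / k!` this gives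
`|P(n)| ≤ ∑_{k ≤ d} Bᵏ (λ n)ᵏ / k! ≤ Bᵈ e^{λ n}`, which is at most `e^{2 λ n} = Aⁿ` once
`n ≥ (2 log B / log A) d`.
-/

open Polynomial Finset Real fwdDiff
open scoped Nat

theorem Polynomial.eval_natCast_eq_sum_choose_smul_fwdDiff_iter {R : Type*} [CommRing R]
    (P : R[X]) (n : ℕ) :
    P.eval (n : R) = ∑ k ∈ range (P.natDegree + 1), n.choose k • Δ_[1] ^[k] P.eval 0 := by
  have hnewton := shift_eq_sum_fwdDiff_iter (1 : R) P.eval n 0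
  rw [zero_add, nsmul_one] at hnewton
  have hn : range (n + 1) ⊆ range (n + P.natDegree + 1) := range_subset_range.2 (by omega)
  have hd : range (P.natDegree + 1) ⊆ range (n + P.natDegree + 1) :=
    range_subset_range.2 (by omega)
  rw [hnewton, sum_subset hn, ← sum_subset hd]
  · intro k _ hk
    rw [P.fwdDiff_iter_eq_zero_of_degree_lt (by simpa using hk), Pi.zero_apply, smul_zero]
  · intro k _ hk
    rw [Nat.choose_eq_zero_of_lt (by simpa using hk), zero_smul]

theorem abs_fwdDiff_iter_le (f : ℝ → ℝ) (A : ℝ) (k : ℕ) (hf : ∀ i ≤ k, |f i| ≤ A ^ i) :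
    |Δ_[1] ^[k] f 0| ≤ (A + 1) ^ k := by
  rw [fwdDiff_iter_eq_sum_shift, add_pow]
  refine (abs_sum_le_sum_abs _ _).trans (sum_le_sum fun i hi => ?_)
  rw [zero_add, nsmul_one, zsmul_eq_mul, abs_mul, one_pow, mul_one, mul_comm]
  push_cast
  rw [abs_mul, abs_pow, abs_neg, abs_one, one_pow, one_mul, Nat.abs_cast]
  exact mul_le_mul_of_nonneg_right (hf i (Nat.lt_succ_iff.mp (mem_range.mp hi))) (by positivity)

theorem Polynomial.abs_eval_natCast_le_sum_choose_mul_pow (P : ℝ[X]) (A : ℝ)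
    (hP : ∀ i ≤ P.natDegree, |P.eval (i : ℝ)| ≤ A ^ i) (n : ℕ) :
    |P.eval (n : ℝ)| ≤ ∑ k ∈ range (P.natDegree + 1), (n.choose k : ℝ) * (A + 1) ^ k := by
  rw [P.eval_natCast_eq_sum_choose_smul_fwdDiff_iter]
  refine (abs_sum_le_sum_abs _ _).trans (sum_le_sum fun k hk => ?_)
  have hkd : k ≤ P.natDegree := Nat.lt_succ_iff.mp (mem_range.mp hk)
  rw [nsmul_eq_mul, abs_mul, Nat.abs_cast]
  exact mul_le_mul_of_nonneg_left
    (abs_fwdDiff_iter_le _ _ _ fun i hi => hP i (hi.trans hkd)) (by positivity)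

theorem sum_choose_mul_pow_le_pow {A : ℝ} (hA : 1 < A) {d n : ℕ}
    (h : 2 * log (2 * (A + 1) / log A) / log A * d ≤ n) :
    ∑ k ∈ range (d + 1), (n.choose k : ℝ) * (A + 1) ^ k ≤ A ^ n := by
  set L := log A
  set B := 2 * (A + 1) / L
  have hL : 0 < L := log_pos hA
  have hB : 1 ≤ B := by
    rw [le_div_iff₀ hL]
    linarith [log_le_sub_one_of_pos (by linarith : 0 < A)]
  have hBd : B ^ d ≤ exp (L / 2 * n) := by
    rw [div_mul_eq_mul_div, div_le_iff₀ hL] at h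
    rw [← exp_log (pow_pos (by linarith) d), log_pow]
    exact exp_le_exp.2 (by linarith)
  calc ∑ k ∈ range (d + 1), (n.choose k : ℝ) * (A + 1) ^ k
      ≤ ∑ k ∈ range (d + 1), B ^ d * ((L / 2 * n) ^ k / k !) := by
        refine sum_le_sum fun k hk => ?_
        have hkd : k ≤ d := Nat.lt_succ_iff.mp (mem_range.mp hk)
        calc (n.choose k : ℝ) * (A + 1) ^ k ≤ n ^ k / k ! * (A + 1) ^ k :=
              mul_le_mul_of_nonneg_right (Nat.choose_le_pow_div k n) (by positivity)
          _ = B ^ k * ((L / 2 * n) ^ k / k !) := by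
              simp only [B, div_pow, mul_pow]
              field_simp
          _ ≤ B ^ d * ((L / 2 * n) ^ k / k !) :=
              mul_le_mul_of_nonneg_right (pow_le_pow_right₀ hB hkd) (by positivity)
    _ = B ^ d * ∑ k ∈ range (d + 1), (L / 2 * n) ^ k / k ! := (mul_sum _ _ _).symm
    _ ≤ exp (L / 2 * n) * exp (L / 2 * n) :=
        mul_le_mul hBd (sum_le_exp_of_nonneg (by positivity) _) (by positivity) (by positivity)
    _ = A ^ n := by
        rw [← exp_add, ← add_mul, add_halves, ← exp_log (by linarith : 0 < A), ← exp_nat_mul,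
          mul_comm]

/-- For every `A > 1` there is `C_A > 1` such that any real polynomial of degree `d ≥ 1`
satisfying `|P(n)| ≤ A^n` for all integers `0 ≤ n ≤ C_A·d` satisfies it for all `n ∈ ℕ`. -/
theorem stmt_14 (A : ℝ) (hA : 1 < A) :
    ∃ C : ℝ, 1 < C ∧
      ∀ d : ℕ, 1 ≤ d → ∀ P : Polynomial ℝ, P.natDegree = d →
        (∀ n : ℕ, (n : ℝ) ≤ C * d → |P.eval (n : ℝ)| ≤ A ^ n) →
        ∀ n : ℕ, |P.eval (n : ℝ)| ≤ A ^ n := by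
  set C := max 2 (2 * log (2 * (A + 1) / log A) / log A)
  have hC : 1 < C := one_lt_two.trans_le (le_max_left _ _)
  refine ⟨C, hC, fun d _ P hPd hsmall n => ?_⟩
  by_cases hn : (n : ℝ) ≤ C * d
  · exact hsmall n hn
  have hnodes : ∀ i ≤ P.natDegree, |P.eval (i : ℝ)| ≤ A ^ i := fun i hi =>
    hsmall i ((Nat.cast_le.2 (hPd ▸ hi)).trans (le_mul_of_one_le_left d.cast_nonneg hC.le))
  have hlarge : 2 * log (2 * (A + 1) / log A) / log A * d ≤ n :=
    (mul_le_mul_of_nonneg_right (le_max_right _ _) d.cast_nonneg).trans (not_le.mp hn).le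
  calc |P.eval (n : ℝ)| ≤ ∑ k ∈ range (d + 1), (n.choose k : ℝ) * (A + 1) ^ k :=
        hPd ▸ P.abs_eval_natCast_le_sum_choose_mul_pow A hnodes n
    _ ≤ A ^ n := sum_choose_mul_pow_le_pow hA hlarge
end

section
/- For all reals A, B > 1 there exists a constant C_{A,B} > 1 such that: for every d ≥ 1 and every real polynomial P of degree d, if |P(n)| ≤ A^n and |P(−n)| ≤ B^n for every integer n with 0 ≤ n ≤ C_{A,B}·d, then |P(n)| ≤ A^n for every natural number n and |P(−n)| ≤ B^n for every natural number n. -/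
/-!
Newton's forward-difference formula writes a polynomial of degree `≤ d` as
`P(n) = ∑_{k ≤ d} (n choose k) Δᵏ P(0)`, and `|Δᵏ P(0)| ≤ 2ᵏ max_{j ≤ k} |P(j)| ≤ 2ᵈ Aᵈ`.
Together with `∑_{k ≤ d} (n choose k) ≤ (e n / d)ᵈ` for `n ≥ d`, this gives
`|P(n)| ≤ (2 e A · n / d)ᵈ`, which is at most `(A^(n/d))ᵈ = Aⁿ` as soon as `n / d` exceeds a
constant depending only on `A`, because `A^t` outgrows every linear function of `t`.
The bound at negative integers is the same statement for `P(-X)`.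
-/

open Finset Polynomial Real fwdDiff Filter

-- `]^` is a token of the exterior-power notation `⋀[R]^n`, hence the space in `Δ_[h] ^[k]`.

lemma norm_fwdDiff_iter_le {M G : Type*} [AddCommMonoid M] [SeminormedAddCommGroup G]
    (h : M) (f : M → G) (y : M) (k : ℕ) {C : ℝ} (hf : ∀ j ≤ k, ‖f (y + j • h)‖ ≤ C) :
    ‖Δ_[h] ^[k] f y‖ ≤ 2 ^ k * C := by
  rw [fwdDiff_iter_eq_sum_shift]
  calc ‖∑ j ∈ range (k + 1), ((-1 : ℤ) ^ (k - j) * k.choose j) • f (y + j • h)‖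
      ≤ ∑ j ∈ range (k + 1), (k.choose j : ℝ) * C := by
        refine norm_sum_le_of_le _ fun j hj ↦ (norm_zsmul_le _ _).trans ?_
        simp only [norm_mul, norm_pow, norm_neg, norm_one, one_pow, one_mul, Int.norm_natCast]
        gcongr
        exact hf j (Nat.lt_succ_iff.mp (mem_range.mp hj))
    _ = 2 ^ k * C := by rw [← sum_mul, ← Nat.cast_sum, Nat.sum_range_choose, Nat.cast_pow,
          Nat.cast_ofNat]

theorem Polynomial.eval_natCast_eq_sum_fwdDiff_iter {R : Type*} [CommRing R] (P : R[X]) {d : ℕ}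
    (hP : P.natDegree ≤ d) (n : ℕ) :
    P.eval (n : R) = ∑ k ∈ range (d + 1), n.choose k • Δ_[1] ^[k] P.eval 0 := by
  have hnewton := shift_eq_sum_fwdDiff_iter 1 P.eval n 0
  rw [zero_add, nsmul_one] at hnewton
  rw [hnewton, sum_subset (range_subset_range.mpr (Nat.le_add_right (n + 1) d)),
    sum_subset (range_subset_range.mpr (by omega : d + 1 ≤ n + 1 + d))]
  · intro k _ hk
    rw [fwdDiff_iter_eq_zero_of_degree_lt (hP.trans_lt (by simpa using hk)), Pi.zero_apply,
      smul_zero]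
  · intro k _ hk
    rw [Nat.choose_eq_zero_of_lt (by simpa using hk), zero_smul]

lemma sum_range_choose_le_exp_mul_div_pow {d n : ℕ} (hdn : d ≤ n) :
    ∑ k ∈ range (d + 1), (n.choose k : ℝ) ≤ (exp 1 * n / d) ^ d := by
  rcases Nat.eq_zero_or_pos d with rfl | hd
  · simp
  set x : ℝ := d / n with hx_def
  have hn : (0 : ℝ) < n := by exact_mod_cast hd.trans_le hdn
  have hx : 0 < x := by positivity
  have hx1 : x ≤ 1 := div_le_one_of_le₀ (by exact_mod_cast hdn) hn.le
  have hexp : (∑ k ∈ range (d + 1), (n.choose k : ℝ)) * x ^ d ≤ exp d := calc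
    _ ≤ ∑ k ∈ range (d + 1), x ^ k * n.choose k := by
        rw [sum_mul]
        refine sum_le_sum fun k hk ↦ ?_
        rw [mul_comm]
        exact mul_le_mul_of_nonneg_right (pow_le_pow_of_le_one hx.le hx1 (Nat.lt_succ_iff.mp (mem_range.mp hk)))
          (Nat.cast_nonneg _)
    _ ≤ ∑ k ∈ range (n + 1), x ^ k * n.choose k :=
        sum_le_sum_of_subset_of_nonneg (range_subset_range.mpr (Nat.succ_le_succ hdn))
          fun _ _ _ ↦ by positivity
    _ = (x + 1) ^ n := by simp [add_pow]
    _ ≤ exp x ^ n := by gcongr; linarith [add_one_le_exp x]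
    _ = exp d := by rw [← exp_nat_mul, hx_def]; field_simp
  calc ∑ k ∈ range (d + 1), (n.choose k : ℝ) ≤ exp d / x ^ d := by
        rwa [le_div_iff₀ (by positivity)]
    _ = (exp 1 * n / d) ^ d := by
        rw [← exp_one_pow, hx_def, ← div_pow]; congr 1; field_simp

theorem Polynomial.abs_eval_natCast_le {P : ℝ[X]} {d n : ℕ} {M : ℝ} (hP : P.natDegree ≤ d)
    (hdn : d ≤ n) (hM : ∀ j ≤ d, |P.eval (j : ℝ)| ≤ M) :
    |P.eval (n : ℝ)| ≤ M * (2 * exp 1 * n / d) ^ d := by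
  have hM0 : 0 ≤ M := (abs_nonneg _).trans (hM 0 d.zero_le)
  have hdiff : ∀ k ≤ d, |Δ_[1] ^[k] P.eval 0| ≤ 2 ^ d * M := fun k hk ↦ calc
    _ ≤ 2 ^ k * M := norm_fwdDiff_iter_le 1 P.eval 0 k fun j hj ↦ by
        simpa using hM j (hj.trans hk)
    _ ≤ 2 ^ d * M := by gcongr; norm_num
  rw [P.eval_natCast_eq_sum_fwdDiff_iter hP n]
  calc |∑ k ∈ range (d + 1), n.choose k • Δ_[1] ^[k] P.eval 0|
      ≤ ∑ k ∈ range (d + 1), (n.choose k : ℝ) * (2 ^ d * M) := by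
        refine (abs_sum_le_sum_abs _ _).trans (sum_le_sum fun k hk ↦ ?_)
        rw [nsmul_eq_mul, abs_mul, Nat.abs_cast]
        gcongr
        exact hdiff k (Nat.lt_succ_iff.mp (mem_range.mp hk))
    _ ≤ (exp 1 * n / d) ^ d * (2 ^ d * M) := by
        rw [← sum_mul]; gcongr; exact sum_range_choose_le_exp_mul_div_pow hdn
    _ = M * (2 * exp 1 * n / d) ^ d := by ring

lemma eventually_mul_le_rpow {A : ℝ} (hA : 1 < A) (c : ℝ) : ∀ᶠ t in atTop, c * t ≤ A ^ t := by
  filter_upwards [(tendsto_exp_mul_div_rpow_atTop 1 _ (log_pos hA)).eventually_ge_atTop c,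
    eventually_gt_atTop 0] with t hct ht
  rw [rpow_one, le_div_iff₀ ht] at hct
  rwa [rpow_def_of_pos (by linarith)]

theorem Polynomial.abs_eval_natCast_le_pow {A C : ℝ} (hA : 1 < A) (hC : 1 ≤ C)
    (hgrowth : ∀ t ≥ C, 2 * exp 1 * A * t ≤ A ^ t) {P : ℝ[X]} {d : ℕ} (hd : 0 < d)
    (hP : P.natDegree ≤ d) (h : ∀ n : ℕ, (n : ℝ) ≤ C * d → |P.eval (n : ℝ)| ≤ A ^ n) (n : ℕ) :
    |P.eval (n : ℝ)| ≤ A ^ n := by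
  by_cases hn : (n : ℝ) ≤ C * d
  · exact h n hn
  have hd' : (0 : ℝ) < d := by exact_mod_cast hd
  have hdCd : (d : ℝ) ≤ C * d := le_mul_of_one_le_left hd'.le hC
  have hCt : C ≤ n / d := by rw [le_div_iff₀ hd']; linarith
  have hdn : d ≤ n := by exact_mod_cast (by linarith : (d : ℝ) ≤ n)
  calc |P.eval (n : ℝ)| ≤ A ^ d * (2 * exp 1 * n / d) ^ d :=
        P.abs_eval_natCast_le hP hdn fun j hj ↦
          (h j (le_trans (by exact_mod_cast hj) hdCd)).trans (pow_le_pow_right₀ hA.le hj)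
    _ = (2 * exp 1 * A * (n / d)) ^ d := by ring
    _ ≤ (A ^ ((n : ℝ) / d)) ^ d := by gcongr; exact hgrowth _ hCt
    _ = A ^ n := by rw [← rpow_mul_natCast (by linarith), div_mul_cancel₀ _ hd'.ne', rpow_natCast]

/-- For all `A, B > 1` there is `C_{A,B} > 1` such that any real polynomial of degree
`d ≥ 1` satisfying `|P(n)| ≤ A^n` and `|P(-n)| ≤ B^n` for all integers `0 ≤ n ≤ C_{A,B}·d`
satisfies both bounds for all `n ∈ ℕ`. -/
theorem stmt_15 (A B : ℝ) (hA : 1 < A) (hB : 1 < B) :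
    ∃ C : ℝ, 1 < C ∧
      ∀ d : ℕ, 1 ≤ d → ∀ P : Polynomial ℝ, P.natDegree = d →
        (∀ n : ℕ, (n : ℝ) ≤ C * d →
          |P.eval (n : ℝ)| ≤ A ^ n ∧ |P.eval (-(n : ℝ))| ≤ B ^ n) →
        (∀ n : ℕ, |P.eval (n : ℝ)| ≤ A ^ n) ∧
        (∀ n : ℕ, |P.eval (-(n : ℝ))| ≤ B ^ n) := by
  obtain ⟨C, hC⟩ := eventually_atTop.mp <| (eventually_gt_atTop 1).and <|
    (eventually_mul_le_rpow hA (2 * exp 1 * A)).and (eventually_mul_le_rpow hB (2 * exp 1 * B))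
  have hC1 : 1 < C := (hC C le_rfl).1
  refine ⟨C, hC1, fun d hd P hP hbound ↦ ⟨?_, fun n ↦ ?_⟩⟩
  · exact P.abs_eval_natCast_le_pow hA hC1.le (fun t ht ↦ (hC t ht).2.1) hd hP.le
      fun n hn ↦ (hbound n hn).1
  · have hdeg : (P.comp (-X)).natDegree ≤ d := natDegree_comp_le.trans (by simp [hP])
    simpa using (P.comp (-X)).abs_eval_natCast_le_pow hB hC1.le (fun t ht ↦ (hC t ht).2.2) hd
      hdeg (fun m hm ↦ by simpa using (hbound m hm).2) n
end

section
/- Let A > 1 and L > e be reals with L^{1/L} ≤ √A (equivalently 2·log L ≤ L·log A). Then for every integer n ≥ 1 and all integers k, m with 0 ≤ k, m ≤ n−1: ∑_{j > L·n} A^{−2j}·binom(j,k)·binom(j,m) ≤ (A/(A−1))·exp((2 − L·log A)·n), where the sum ranges over integers j > L·n. -/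
/-!
A binomial coefficient `C(j, l)` with `l ≤ n ≤ j` is at most `j^n / n! ≤ e^n (j/n)^n`. For
`j ≥ L n`, the decrease of `log t / t` on `[e, ∞)` turns `2 log L ≤ L log A` into
`2 log (j/n) ≤ (j/n) log A`, i.e. `(j/n)^{2n} ≤ A^j`. Hence every term of the tail is at most
`e^{2n} A^{-j}`, and the geometric series starting beyond `L n` sums to at most
`e^{2n} A^{-Ln} · A/(A-1)`.
-/

open Real
open scoped Nat

lemma pow_div_factorial_le_pow_div_factorial {j l n : ℕ} (hl : l ≤ n) (hnj : n ≤ j) :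
    (j : ℝ) ^ l / l ! ≤ (j : ℝ) ^ n / n ! := by
  induction n, hl using Nat.le_induction with
  | base => rfl
  | succ n _ ih =>
    have hj : ((n + 1 : ℕ) : ℝ) ≤ j := by exact_mod_cast hnj
    calc (j : ℝ) ^ l / l ! ≤ (j : ℝ) ^ n / n ! := ih (by omega)
      _ ≤ (j : ℝ) ^ n / n ! * (j / (n + 1 : ℕ)) := by
          refine le_mul_of_one_le_right (by positivity) ?_
          rwa [one_le_div (by positivity)]
      _ = (j : ℝ) ^ (n + 1) / (n + 1)! := by
          rw [Nat.factorial_succ]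
          push_cast
          field_simp
          ring

lemma pow_div_factorial_le_exp_mul_div_pow (j n : ℕ) :
    (j : ℝ) ^ n / n ! ≤ exp n * ((j : ℝ) / n) ^ n := by
  rcases eq_or_ne n 0 with rfl | hn
  · simp
  calc (j : ℝ) ^ n / n ! = ((j : ℝ) / n) ^ n * ((n : ℝ) ^ n / n !) := by
        rw [div_pow]; field_simp
    _ ≤ ((j : ℝ) / n) ^ n * exp n :=
        mul_le_mul_of_nonneg_left (Real.pow_div_factorial_le_exp _ (by positivity) n) (by positivity)
    _ = exp n * ((j : ℝ) / n) ^ n := mul_comm _ _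

lemma choose_le_exp_mul_div_pow {j l n : ℕ} (hl : l ≤ n) (hnj : n ≤ j) :
    (j.choose l : ℝ) ≤ exp n * ((j : ℝ) / n) ^ n :=
  (Nat.choose_le_pow_div l j).trans <|
    (pow_div_factorial_le_pow_div_factorial hl hnj).trans
      (pow_div_factorial_le_exp_mul_div_pow j n)

lemma two_mul_log_le_mul_log {A L t : ℝ} (hL : exp 1 ≤ L) (hLA : 2 * log L ≤ L * log A)
    (ht : L ≤ t) : 2 * log t ≤ t * log A := by
  have hL0 : 0 < L := (exp_pos 1).trans_le hL
  have ht0 : 0 < t := hL0.trans_le ht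
  have hdecr : log t / t ≤ log L / L := log_div_self_antitoneOn hL (hL.trans ht) ht
  rw [div_le_div_iff₀ ht0 hL0] at hdecr
  nlinarith

lemma div_pow_two_mul_le_pow {A L : ℝ} {j n : ℕ} (hA : 0 < A) (hL : exp 1 ≤ L)
    (hLA : 2 * log L ≤ L * log A) (hn : 0 < n) (hj : L * n ≤ j) :
    ((j : ℝ) / n) ^ (2 * n) ≤ A ^ j := by
  have hn0 : (0 : ℝ) < n := by exact_mod_cast hn
  have ht : L ≤ (j : ℝ) / n := by rwa [le_div_iff₀ hn0]
  have ht0 : 0 < (j : ℝ) / n := ((exp_pos 1).trans_le hL).trans_le ht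
  have hlog := two_mul_log_le_mul_log hL hLA ht
  rw [← log_le_log_iff (by positivity) (by positivity), Real.log_pow, Real.log_pow]
  calc ((2 * n : ℕ) : ℝ) * log ((j : ℝ) / n) = n * (2 * log ((j : ℝ) / n)) := by push_cast; ring
    _ ≤ n * ((j / n) * log A) := mul_le_mul_of_nonneg_left hlog hn0.le
    _ = j * log A := by field_simp

lemma inv_pow_mul_choose_mul_choose_le {A L : ℝ} {j k m n : ℕ} (hA : 0 < A) (hL : exp 1 ≤ L)
    (hLA : 2 * log L ≤ L * log A) (hn : 0 < n) (hk : k ≤ n) (hm : m ≤ n) (hj : L * n ≤ j) :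
    (A ^ (2 * j))⁻¹ * (j.choose k : ℝ) * (j.choose m : ℝ) ≤ exp (2 * n) * A⁻¹ ^ j := by
  have hnj : n ≤ j := by
    have hL1 : 1 ≤ L := (one_le_exp zero_le_one).trans hL
    exact_mod_cast (le_mul_of_one_le_left n.cast_nonneg hL1).trans hj
  have hchoose : (j.choose k : ℝ) * (j.choose m : ℝ) ≤ exp (2 * n) * ((j : ℝ) / n) ^ (2 * n) := by
    calc (j.choose k : ℝ) * (j.choose m : ℝ)
        ≤ (exp n * ((j : ℝ) / n) ^ n) * (exp n * ((j : ℝ) / n) ^ n) :=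
          mul_le_mul (choose_le_exp_mul_div_pow hk hnj) (choose_le_exp_mul_div_pow hm hnj)
            (by positivity) (by positivity)
      _ = exp (2 * n) * ((j : ℝ) / n) ^ (2 * n) := by
          rw [two_mul, two_mul, exp_add, pow_add]; ring
  calc (A ^ (2 * j))⁻¹ * (j.choose k : ℝ) * (j.choose m : ℝ)
      = (A ^ (2 * j))⁻¹ * ((j.choose k : ℝ) * (j.choose m : ℝ)) := mul_assoc _ _ _
    _ ≤ (A ^ (2 * j))⁻¹ * (exp (2 * n) * A ^ j) := by
        refine mul_le_mul_of_nonneg_left (hchoose.trans ?_) (by positivity)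
        exact mul_le_mul_of_nonneg_left (div_pow_two_mul_le_pow hA hL hLA hn hj) (exp_pos _).le
    _ = exp (2 * n) * A⁻¹ ^ j := by
        rw [two_mul, pow_add, inv_pow]; field_simp

lemma tsum_subtype_lt_le_mul_rpow_div {f : ℕ → ℝ} {x C r : ℝ} (hC : 0 ≤ C) (hr0 : 0 < r) (hr1 : r < 1)
    (hf0 : ∀ j, 0 ≤ f j) (hf : ∀ j : ℕ, x < j → f j ≤ C * r ^ j) :
    ∑' j : {j : ℕ // x < j}, f j ≤ C * r ^ x / (1 - r) := by
  have hceil : ∀ j : {j : ℕ // x < j}, ⌈x⌉₊ ≤ (j : ℕ) := fun j => Nat.ceil_le.mpr j.2.le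
  have hgeom : Summable fun i : ℕ => C * r ^ ⌈x⌉₊ * r ^ i :=
    (summable_geometric_of_lt_one hr0.le hr1).mul_left _
  have hsum : Summable fun j : {j : ℕ // x < j} => f j :=
    Summable.of_nonneg_of_le (fun j => hf0 j) (fun j => hf j j.2)
      (((summable_geometric_of_lt_one hr0.le hr1).mul_left C).subtype _)
  calc ∑' j : {j : ℕ // x < j}, f j ≤ ∑' i : ℕ, C * r ^ ⌈x⌉₊ * r ^ i := by
        refine hsum.tsum_le_tsum_of_inj (fun j => (j : ℕ) - ⌈x⌉₊) ?_ (fun _ _ => by positivity)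
          ?_ hgeom
        · intro a b hab
          have := hceil a
          have := hceil b
          exact Subtype.ext (by simp only at hab; omega)
        · intro j
          rw [mul_assoc, ← pow_add, Nat.add_sub_cancel' (hceil j)]
          exact hf j j.2
    _ = C * r ^ ⌈x⌉₊ / (1 - r) := by
        rw [tsum_mul_left, tsum_geometric_of_lt_one hr0.le hr1, div_eq_mul_inv]
    _ ≤ C * r ^ x / (1 - r) := by
        have hpow : r ^ ⌈x⌉₊ ≤ r ^ x := by
          rw [← rpow_natCast]
          exact rpow_le_rpow_of_exponent_ge hr0 hr1.le (Nat.le_ceil x)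
        exact div_le_div_of_nonneg_right (mul_le_mul_of_nonneg_left hpow hC) (by linarith)

/-- Tail bound for the entries of the moment matrix: for `A > 1`, `L > e` with
`2 log L ≤ L log A` (i.e. `L^{1/L} ≤ √A`), `n ≥ 1` and `k, m ≤ n-1`,
`∑_{j > Ln} A^{-2j} C(j,k) C(j,m) ≤ (A/(A-1)) exp((2 - L log A) n)`. -/
theorem stmt_16 (A L : ℝ) (hA : 1 < A) (hL : Real.exp 1 < L)
    (hLA : 2 * Real.log L ≤ L * Real.log A)
    (n : ℕ) (hn : 1 ≤ n) (k m : ℕ) (hk : k ≤ n - 1) (hm : m ≤ n - 1) :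
    (∑' j : {j : ℕ // L * n < (j : ℝ)},
        (A ^ (2 * (j : ℕ)))⁻¹ * ((j : ℕ).choose k : ℝ) * ((j : ℕ).choose m : ℝ))
      ≤ (A / (A - 1)) * Real.exp ((2 - L * Real.log A) * n) := by
  have hA0 : 0 < A := one_pos.trans hA
  calc _ ≤ exp (2 * n) * A⁻¹ ^ (L * n) / (1 - A⁻¹) :=
        tsum_subtype_lt_le_mul_rpow_div (exp_pos _).le (inv_pos.mpr hA0) (inv_lt_one_of_one_lt₀ hA)
          (fun j => by positivity) fun j hj =>
            inv_pow_mul_choose_mul_choose_le hA0 hL.le hLA hn (by omega) (by omega) hj.le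
    _ = (A / (A - 1)) * exp ((2 - L * log A) * n) := by
        rw [rpow_def_of_pos (inv_pos.mpr hA0), log_inv, ← exp_add]
        field_simp
        ring_nf
end

section
/- There exists an absolute constant C₂ > 0 such that the following holds. Let d ∈ ℕ, let γ ∈ (0,1] and t ≥ 1 be reals, let E = {x = (x₀,…,x_d) ∈ ℝ^{d+1} : ∑_{k=0}^d x_k²·γ^{2k} ≤ t²}, and let Ψ be a (d+1)×(d+1) real lower triangular matrix all of whose diagonal entries equal 1. Then 2^{−(d+1)}·vol(E) ≤ #(Ψ(E) ∩ ℤ^{d+1}) ≤ vol(E)·exp(C₂·(d+1)·(1 + log m)), where m = min{d+1, (1−γ)^{−1}} for γ < 1 and m = d+1 for γ = 1, vol denotes (d+1)-dimensional Lebesgue measure, Ψ(E) is the image of E under Ψ, and # counts integer lattice points. -/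
open MeasureTheory Set Pointwise

set_option linter.unusedSectionVars false
set_option maxHeartbeats 1000000

noncomputable section
namespace S18


def Lmap (γ : ℝ) (d : ℕ) : (Fin (d+1) → ℝ) →ₗ[ℝ] EuclideanSpace ℝ (Fin (d+1)) where
  toFun x := WithLp.toLp 2 (fun k : Fin (d+1) => γ ^ (k:ℕ) * x k)
  map_add' x y := by ext k; simp [mul_add]
  map_smul' c x := by ext k; simp; ring

lemma Lmap_apply (γ : ℝ) (d : ℕ) (x : Fin (d+1) → ℝ) (k : Fin (d+1)) :
    Lmap γ d x k = γ ^ (k:ℕ) * x k := rfl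

def Es (γ : ℝ) (d : ℕ) (s : ℝ) : Set (Fin (d+1) → ℝ) := {x | ‖Lmap γ d x‖ ≤ s}

lemma mem_Es {γ : ℝ} {d : ℕ} {s : ℝ} {x : Fin (d+1) → ℝ} :
    x ∈ Es γ d s ↔ ‖Lmap γ d x‖ ≤ s := Iff.rfl

lemma norm_Lmap_sq (γ : ℝ) (d : ℕ) (x : Fin (d+1) → ℝ) :
    ‖Lmap γ d x‖ = Real.sqrt (∑ k : Fin (d+1), (x k)^2 * γ ^ (2*(k:ℕ))) := by
  rw [EuclideanSpace.norm_eq]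
  congr 1
  refine Finset.sum_congr rfl fun k _ => ?_
  rw [Real.norm_eq_abs, sq_abs, Lmap_apply, pow_mul]
  ring

lemma Es_eq_set (γ t : ℝ) (d : ℕ) (ht : 0 ≤ t) :
    {x : Fin (d+1) → ℝ | ∑ k : Fin (d+1), (x k)^2 * γ ^ (2*(k:ℕ)) ≤ t^2} = Es γ d t := by
  ext x
  simp only [mem_Es, mem_setOf_eq, norm_Lmap_sq]
  constructor
  · intro h
    calc Real.sqrt (∑ k : Fin (d+1), (x k)^2 * γ ^ (2*(k:ℕ))) ≤ Real.sqrt (t^2) :=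
      Real.sqrt_le_sqrt h
    _ = t := Real.sqrt_sq ht
  · intro h
    have h0 : 0 ≤ ∑ k : Fin (d+1), (x k)^2 * γ ^ (2*(k:ℕ)) := by
      apply Finset.sum_nonneg; intro k _; rw [pow_mul]; positivity
    calc ∑ k : Fin (d+1), (x k)^2 * γ ^ (2*(k:ℕ))
        = (Real.sqrt (∑ k : Fin (d+1), (x k)^2 * γ ^ (2*(k:ℕ))))^2 := (Real.sq_sqrt h0).symm
    _ ≤ t^2 := by
        apply pow_le_pow_left₀ (Real.sqrt_nonneg _) h

lemma coord_le_norm_Lmap (γ : ℝ) (d : ℕ) (hγ : 0 < γ) (x : Fin (d+1) → ℝ) (k : Fin (d+1)) :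
    γ ^ (k:ℕ) * |x k| ≤ ‖Lmap γ d x‖ := by
  rw [norm_Lmap_sq]
  have h1 : γ ^ (k:ℕ) * |x k| = Real.sqrt ((x k)^2 * γ ^ (2*(k:ℕ))) := by
    have : (x k)^2 * γ ^ (2*(k:ℕ)) = (γ ^ (k:ℕ) * |x k|)^2 := by
      rw [pow_mul]; rw [mul_pow, ← sq_abs (x k)]; ring
    rw [this, Real.sqrt_sq (by positivity)]
  rw [h1]
  apply Real.sqrt_le_sqrt
  apply Finset.single_le_sum (f := fun j : Fin (d+1) => (x j)^2 * γ ^ (2*(j:ℕ)))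
    (fun j _ => by rw [pow_mul]; positivity) (Finset.mem_univ k)

lemma measurableSet_Es (γ : ℝ) (d : ℕ) (s : ℝ) : MeasurableSet (Es γ d s) :=
  ((isClosed_le (Continuous.norm ((Lmap γ d).continuous_of_finiteDimensional)) continuous_const)).measurableSet

lemma isCompact_Es (γ : ℝ) (d : ℕ) (s : ℝ) (hγ : 0 < γ) (hγ1 : γ ≤ 1) :
    IsCompact (Es γ d s) := by
  apply Metric.isCompact_of_isClosed_isBounded
  · exact isClosed_le (Continuous.norm ((Lmap γ d).continuous_of_finiteDimensional)) continuous_const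
  · rw [Metric.isBounded_iff_subset_closedBall 0]
    refine ⟨s * γ⁻¹ ^ d, fun x hx => ?_⟩
    have hx' : ‖Lmap γ d x‖ ≤ s := hx
    simp only [Metric.mem_closedBall, dist_zero_right]
    have hb : ∀ k : Fin (d+1), ‖x k‖ ≤ s * γ⁻¹ ^ d := by
      intro k
      have h3 : γ ^ (k:ℕ) * |x k| ≤ s := le_trans (coord_le_norm_Lmap γ d hγ x k) hx'
      have h4 : γ ^ d ≤ γ ^ (k:ℕ) := pow_le_pow_of_le_one hγ.le hγ1 (Nat.lt_succ_iff.mp k.isLt)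
      have h5 : γ ^ d * |x k| ≤ s := le_trans (by nlinarith [abs_nonneg (x k), pow_pos hγ d]) h3
      have h6 : |x k| ≤ s / γ ^ d := (le_div_iff₀' (pow_pos hγ d)).mpr h5
      rw [Real.norm_eq_abs]
      calc |x k| ≤ s / γ ^ d := h6
      _ = s * γ⁻¹ ^ d := by rw [div_eq_mul_inv, inv_pow]
    have hs0 : 0 ≤ s * γ⁻¹ ^ d := le_trans (norm_nonneg _) (hb ⟨0, Nat.succ_pos d⟩)
    exact (pi_norm_le_iff_of_nonneg hs0).mpr hb

variable {d : ℕ}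

lemma smul_Es (γ : ℝ) (d : ℕ) {a : ℝ} (ha : 0 < a) (s : ℝ) :
    a • Es γ d s = Es γ d (a * s) := by
  ext x
  rw [mem_smul_set_iff_inv_smul_mem₀ ha.ne']
  simp only [mem_Es, _root_.map_smul, norm_smul, Real.norm_eq_abs,
    abs_of_pos (inv_pos.mpr ha)]
  rw [inv_mul_le_iff₀ ha]

lemma volume_Es_scale (γ : ℝ) (d : ℕ) {a : ℝ} (ha : 0 < a) (s : ℝ) :
    volume (Es γ d (a * s)) = ENNReal.ofReal (a ^ (d+1)) * volume (Es γ d s) := by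
  rw [← smul_Es γ d ha s, Measure.addHaar_smul_of_nonneg volume ha.le, (by rw [Module.finrank_fintype_fun_eq_card, Fintype.card_fin] : Module.finrank ℝ (Fin (d+1) → ℝ) = d + 1)]

lemma volume_Es_lt_top (γ : ℝ) (d : ℕ) (s : ℝ) (hγ : 0 < γ) (hγ1 : γ ≤ 1) :
    volume (Es γ d s) < ⊤ := (isCompact_Es γ d s hγ hγ1).measure_lt_top



lemma det_one_of_lowerUnipotent {n : ℕ} {R : Type*} [CommRing R] (A : Matrix (Fin n) (Fin n) R)
    (hl : ∀ i j, i < j → A i j = 0) (hd : ∀ i, A i i = 1) : A.det = 1 := by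
  rw [Matrix.det_of_lowerTriangular A (fun i j h => hl i j h)]
  simp [hd]

variable {d : ℕ}

lemma finrank_pi_real : Module.finrank ℝ (Fin (d+1) → ℝ) = d + 1 := by
  rw [Module.finrank_fintype_fun_eq_card, Fintype.card_fin]

lemma volume_image_mulVec (Ψ : Matrix (Fin (d+1)) (Fin (d+1)) ℝ) (hdet : Ψ.det = 1)
    (A : Set (Fin (d+1) → ℝ)) : volume (Ψ.mulVec '' A) = volume A := by
  have h := Measure.addHaar_image_linearMap volume (Matrix.toLin' Ψ) A
  have he : ⇑(Matrix.toLin' Ψ) = Ψ.mulVec := by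
    funext v; exact Matrix.toLin'_apply Ψ v
  rw [he] at h
  rw [h, LinearMap.det_toLin', hdet]
  simp

lemma mulVec_invOf_mulVec (Ψ : Matrix (Fin (d+1)) (Fin (d+1)) ℝ) [Invertible Ψ]
    (x : Fin (d+1) → ℝ) : (⅟Ψ).mulVec (Ψ.mulVec x) = x := by
  rw [Matrix.mulVec_mulVec, invOf_mul_self, Matrix.one_mulVec]

lemma mulVec_mulVec_invOf (Ψ : Matrix (Fin (d+1)) (Fin (d+1)) ℝ) [Invertible Ψ]
    (x : Fin (d+1) → ℝ) : Ψ.mulVec ((⅟Ψ).mulVec x) = x := by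
  rw [Matrix.mulVec_mulVec, mul_invOf_self, Matrix.one_mulVec]

lemma image_mulVec_eq_preimage (Ψ : Matrix (Fin (d+1)) (Fin (d+1)) ℝ) [Invertible Ψ]
    (A : Set (Fin (d+1) → ℝ)) : Ψ.mulVec '' A = (⅟Ψ).mulVec ⁻¹' A := by
  ext y
  constructor
  · rintro ⟨a, ha, rfl⟩
    simpa [mulVec_invOf_mulVec] using ha
  · intro hy
    exact ⟨(⅟Ψ).mulVec y, hy, mulVec_mulVec_invOf Ψ y⟩

lemma measurable_mulVec (Ψ : Matrix (Fin (d+1)) (Fin (d+1)) ℝ) :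
    Continuous (Ψ.mulVec) := by
  have he : ⇑(Matrix.toLin' Ψ) = Ψ.mulVec := by funext v; exact Matrix.toLin'_apply Ψ v
  rw [← he]
  exact (Matrix.toLin' Ψ).continuous_of_finiteDimensional

lemma measurableSet_image_mulVec (Ψ : Matrix (Fin (d+1)) (Fin (d+1)) ℝ) [Invertible Ψ]
    {A : Set (Fin (d+1) → ℝ)} (hA : MeasurableSet A) : MeasurableSet (Ψ.mulVec '' A) := by
  rw [image_mulVec_eq_preimage]
  exact hA.preimage (measurable_mulVec _).measurable

lemma injective_mulVec (Ψ : Matrix (Fin (d+1)) (Fin (d+1)) ℝ) [Invertible Ψ] :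
    Function.Injective (Ψ.mulVec) := by
  intro a b hab
  have := congrArg ((⅟Ψ).mulVec) hab
  simpa [mulVec_invOf_mulVec] using this




variable {n : Type*} [Fintype n] [DecidableEq n]

def castZ (c : n → ℤ) : n → ℝ := fun k => (c k : ℝ)

lemma cast_mulVec (M : Matrix n n ℤ) (c : n → ℤ) :
    castZ (M.mulVec c) = (M.map (Int.cast : ℤ → ℝ)).mulVec (castZ c) := by
  funext j
  simp [castZ, Matrix.mulVec, dotProduct]

lemma invOf_mulVec_cancel {R : Type*} [CommRing R] (M : Matrix n n R) [Invertible M]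
    (x : n → R) : (⅟M).mulVec (M.mulVec x) = x := by
  rw [Matrix.mulVec_mulVec, invOf_mul_self, Matrix.one_mulVec]

lemma mulVec_invOf_cancel {R : Type*} [CommRing R] (M : Matrix n n R) [Invertible M]
    (x : n → R) : M.mulVec ((⅟M).mulVec x) = x := by
  rw [Matrix.mulVec_mulVec, mul_invOf_self, Matrix.one_mulVec]

lemma injective_mulVec' {R : Type*} [CommRing R] (M : Matrix n n R) [Invertible M] :
    Function.Injective (M.mulVec) := by
  intro a b hab
  have := congrArg ((⅟M).mulVec) hab
  simpa [invOf_mulVec_cancel] using this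

/-- The statement's subtype is equivalent to integer vectors landing in `A`. -/
def eqvInt (A : Set (n → ℝ)) :
    {x : n → ℝ // x ∈ A ∧ ∀ k, ∃ z : ℤ, x k = (z : ℝ)} ≃ {y : n → ℤ // castZ y ∈ A} where
  toFun x := ⟨fun k => Classical.choose (x.2.2 k), by
    have hx : castZ (fun k => Classical.choose (x.2.2 k)) = x.1 :=
      funext fun k => (Classical.choose_spec (x.2.2 k)).symm
    rw [hx]; exact x.2.1⟩
  invFun y := ⟨castZ y.1, y.2, fun k => ⟨y.1 k, rfl⟩⟩
  left_inv x := Subtype.ext (funext fun k => (Classical.choose_spec (x.2.2 k)).symm)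
  right_inv y := Subtype.ext (funext fun k => by
    apply Int.cast_injective (α := ℝ)
    exact (Classical.choose_spec ((⟨y.1 k, rfl⟩ : ∃ z : ℤ, castZ y.1 k = (z:ℝ)))).symm)

/-- Change of basis `Ψ B = M` for lattice point counting. -/
def eqvLat (A : Set (n → ℝ)) (Ψ B : Matrix n n ℝ) (M : Matrix n n ℤ)
    [Invertible Ψ] [Invertible M] (hPB : Ψ * B = M.map (Int.cast : ℤ → ℝ)) :
    {c : n → ℤ // B.mulVec (castZ c) ∈ A} ≃ {y : n → ℤ // castZ y ∈ Ψ.mulVec '' A} where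
  toFun c := ⟨M.mulVec c.1, ⟨B.mulVec (castZ c.1), c.2, by
    rw [cast_mulVec, ← hPB, ← Matrix.mulVec_mulVec]⟩⟩
  invFun y := ⟨(⅟M).mulVec y.1, by
    obtain ⟨a, ha, hay⟩ := y.2
    have h1 : Ψ.mulVec (B.mulVec (castZ ((⅟M).mulVec y.1))) = castZ y.1 := by
      rw [Matrix.mulVec_mulVec, hPB, ← cast_mulVec, mulVec_invOf_cancel]
    have h2 : B.mulVec (castZ ((⅟M).mulVec y.1)) = a :=
      injective_mulVec' Ψ (by rw [h1, hay])
    rw [h2]; exact ha⟩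
  left_inv c := Subtype.ext (invOf_mulVec_cancel M c.1)
  right_inv y := Subtype.ext (mulVec_invOf_cancel M y.1)

lemma finite_int_in_bounded {A : Set (n → ℝ)} (hA : Bornology.IsBounded A) :
    {y : n → ℤ | castZ y ∈ A}.Finite := by
  obtain ⟨R, hR⟩ := (Metric.isBounded_iff_subset_closedBall 0).mp hA
  apply Set.Finite.subset (Set.Finite.pi (t := fun _ : n => Set.Icc (-⌈R⌉) ⌈R⌉)
    (fun _ => Set.finite_Icc _ _))
  intro y hy
  have h1 : ‖castZ y‖ ≤ R := by
    have := hR hy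
    simpa [Metric.mem_closedBall, dist_zero_right] using this
  intro k _
  have h2 : |(y k : ℝ)| ≤ R := by
    have := norm_le_pi_norm (castZ y) k
    rw [Real.norm_eq_abs] at this
    exact le_trans this h1
  rw [abs_le] at h2
  constructor
  · have : ((-⌈R⌉ : ℤ) : ℝ) ≤ (y k : ℝ) := by
      push_cast
      linarith [Int.le_ceil R]
    exact_mod_cast this
  · have : ((y k : ℤ) : ℝ) ≤ ((⌈R⌉ : ℤ) : ℝ) := le_trans h2.2 (Int.le_ceil R)
    exact_mod_cast this




variable {ι : Type*} [Fintype ι] [DecidableEq ι]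

def Q (ι : Type*) [Fintype ι] : Set (ι → ℝ) := Set.univ.pi fun _ => Ico (0:ℝ) 1

lemma measurableSet_Q : MeasurableSet (Q ι) :=
  MeasurableSet.univ_pi (fun _ => measurableSet_Ico)

lemma volume_Q : volume (Q ι) = 1 := by
  rw [Q, volume_pi_pi]
  simp [Real.volume_Ico]

lemma mem_cell_iff {c : ι → ℤ} {x : ι → ℝ} :
    x ∈ castZ c +ᵥ Q ι ↔ (fun k => ⌊x k⌋) = c := by
  constructor
  · rintro ⟨u, hu, rfl⟩
    funext k
    have huk : u k ∈ Ico (0:ℝ) 1 := hu k (mem_univ k)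
    rw [Int.floor_eq_iff]
    constructor
    · have : (0:ℝ) ≤ u k := huk.1
      show (c k : ℝ) ≤ castZ c k + u k
      simp only [castZ]; linarith
    · have : u k < 1 := huk.2
      show castZ c k + u k < (c k : ℝ) + 1
      simp only [castZ]; linarith
  · rintro rfl
    refine ⟨x - castZ (fun k => ⌊x k⌋), fun k _ => ?_, by funext k; simp⟩
    simp only [castZ, Pi.sub_apply, mem_Ico]
    constructor
    · linarith [Int.floor_le (x k)]
    · linarith [Int.lt_floor_add_one (x k)]

lemma lower_core (H K : Set (ι → ℝ)) (hH : MeasurableSet H)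
    (hsub : ∀ a b, a ∈ H → b ∈ H → a - b ∈ K)
    (hT : {c : ι → ℤ | castZ c ∈ K}.Finite) :
    volume H ≤ (Nat.card {c : ι → ℤ // castZ c ∈ K} : ENNReal) := by
  classical
  set N : ℕ := Nat.card {c : ι → ℤ // castZ c ∈ K} with hN
  set G : (ι → ℤ) → Set (ι → ℝ) := fun c => ((fun x => castZ c + x) ⁻¹' H) ∩ Q ι with hG
  have hcover : H = ⋃ c : ι → ℤ, H ∩ (castZ c +ᵥ Q ι) := by
    ext x
    simp only [mem_iUnion, mem_inter_iff]
    exact ⟨fun hx => ⟨fun k => ⌊x k⌋, hx, mem_cell_iff.mpr rfl⟩, fun ⟨c, hx, _⟩ => hx⟩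
  have hcellm : ∀ c : ι → ℤ, MeasurableSet (castZ c +ᵥ Q ι) := by
    intro c
    have he : castZ c +ᵥ Q ι = (fun x => -castZ c + x) ⁻¹' Q ι := by
      ext x
      rw [Set.mem_vadd_set_iff_neg_vadd_mem]
      rfl
    rw [he]
    exact measurableSet_Q.preimage (measurable_const_add _)
  have hdisj : Pairwise (Function.onFun Disjoint fun c : ι → ℤ => H ∩ (castZ c +ᵥ Q ι)) := by
    intro c c' hcc'
    refine Set.disjoint_left.mpr ?_
    rintro x ⟨-, hx⟩ ⟨-, hx'⟩
    exact hcc' ((mem_cell_iff.mp hx).symm.trans (mem_cell_iff.mp hx'))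
  have hμ : volume H = ∑' c : ι → ℤ, volume (H ∩ (castZ c +ᵥ Q ι)) := by
    conv_lhs => rw [hcover]
    exact measure_iUnion hdisj (fun c => hH.inter (hcellm c))
  have htrans : ∀ c : ι → ℤ, H ∩ (castZ c +ᵥ Q ι) = castZ c +ᵥ G c := by
    intro c
    ext x
    constructor
    · rintro ⟨hxH, u, huQ, rfl⟩
      exact ⟨u, ⟨hxH, huQ⟩, rfl⟩
    · rintro ⟨u, ⟨huH, huQ⟩, rfl⟩
      exact ⟨huH, u, huQ, rfl⟩
  have hGm : ∀ c, MeasurableSet (G c) := fun c =>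
    (hH.preimage (measurable_const_add _)).inter measurableSet_Q
  have hμc : ∀ c, volume (H ∩ (castZ c +ᵥ Q ι)) = volume (G c) := by
    intro c
    rw [htrans c, measure_vadd]
  have key : ∀ x, (∑' c : ι → ℤ, (G c).indicator (1 : (ι → ℝ) → ENNReal) x)
      ≤ (Q ι).indicator (fun _ => (N : ENNReal)) x := by
    intro x
    by_cases hxQ : x ∈ Q ι
    · rw [indicator_of_mem hxQ]
      by_cases hex : ∃ c₀ : ι → ℤ, castZ c₀ + x ∈ H
      · obtain ⟨c₀, hc₀⟩ := hex
        have hbound : ∀ c : ι → ℤ, (G c).indicator (1 : (ι → ℝ) → ENNReal) x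
            ≤ {c' : ι → ℤ | castZ c' ∈ K}.indicator (fun _ => (1:ENNReal)) (c - c₀) := by
          intro c
          by_cases hc : x ∈ G c
          · have hmem : c - c₀ ∈ {c' : ι → ℤ | castZ c' ∈ K} := by
              have h1 : castZ c + x ∈ H := hc.1
              have h2 := hsub _ _ h1 hc₀
              have hcast : (castZ c + x) - (castZ c₀ + x) = castZ (c - c₀) := by
                funext k
                simp only [castZ, Pi.sub_apply, Pi.add_apply, Int.cast_sub]
                ring
              rwa [hcast] at h2
            rw [indicator_of_mem hc, indicator_of_mem hmem]
            simp
          · rw [indicator_of_notMem hc]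
            exact zero_le
        calc (∑' c : ι → ℤ, (G c).indicator (1 : (ι → ℝ) → ENNReal) x)
            ≤ ∑' c : ι → ℤ, {c' : ι → ℤ | castZ c' ∈ K}.indicator (fun _ => (1:ENNReal)) (c - c₀) :=
              ENNReal.tsum_le_tsum hbound
          _ = ∑' c : ι → ℤ, {c' : ι → ℤ | castZ c' ∈ K}.indicator (fun _ => (1:ENNReal)) c :=
              (Equiv.subRight c₀).tsum_eq _
          _ = ∑ c ∈ hT.toFinset, {c' : ι → ℤ | castZ c' ∈ K}.indicator (fun _ => (1:ENNReal)) c :=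
              tsum_eq_sum (fun b hb => indicator_of_notMem (by
                simpa [Set.Finite.mem_toFinset] using hb) _)
          _ = ∑ c ∈ hT.toFinset, (1:ENNReal) :=
              Finset.sum_congr rfl (fun b hb =>
                indicator_of_mem (hT.mem_toFinset.mp hb) (fun _ => (1:ENNReal)))
          _ = (hT.toFinset.card : ENNReal) := by simp
          _ = (N : ENNReal) := by
              have hcard : Nat.card ↥{c : ι → ℤ | castZ c ∈ K} = hT.toFinset.card := by
                rw [Nat.card_coe_set_eq, Set.ncard_eq_toFinset_card _ hT]
              rw [hN]
              exact_mod_cast congrArg (Nat.cast (R := ENNReal)) hcard.symm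
      · have hzero : ∀ c : ι → ℤ, (G c).indicator (1 : (ι → ℝ) → ENNReal) x = 0 := by
          intro c
          exact indicator_of_notMem (fun hc => hex ⟨c, hc.1⟩) _
        rw [tsum_congr hzero]
        simp
    · rw [indicator_of_notMem hxQ]
      have hzero : ∀ c : ι → ℤ, (G c).indicator (1 : (ι → ℝ) → ENNReal) x = 0 := by
        intro c
        exact indicator_of_notMem (fun hc => hxQ hc.2) _
      rw [tsum_congr hzero]
      simp
  calc volume H = ∑' c : ι → ℤ, volume (G c) := by rw [hμ]; exact tsum_congr hμc
    _ = ∑' c : ι → ℤ, ∫⁻ x, (G c).indicator (1 : (ι → ℝ) → ENNReal) x := by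
        exact tsum_congr fun c => (lintegral_indicator_one (hGm c)).symm
    _ = ∫⁻ x, ∑' c : ι → ℤ, (G c).indicator (1 : (ι → ℝ) → ENNReal) x :=
        (lintegral_tsum (fun c => (measurable_one.indicator (hGm c)).aemeasurable)).symm
    _ ≤ ∫⁻ x, (Q ι).indicator (fun _ => (N : ENNReal)) x := lintegral_mono key
    _ = (N : ENNReal) * volume (Q ι) := lintegral_indicator_const measurableSet_Q _
    _ = (N : ENNReal) := by rw [volume_Q, mul_one]




lemma geom_id (x : ℝ) : ∀ n : ℕ,
    (1-x)^2 * ∑ i ∈ Finset.range n, (1+(i:ℝ)) * x^i = 1 - ((n:ℝ)+1)*x^n + (n:ℝ)*x^(n+1) := by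
  intro n
  induction n with
  | zero => simp
  | succ n ih =>
    rw [Finset.sum_range_succ, mul_add, ih]
    push_cast
    ring

lemma S1_le_inv (x : ℝ) (hx0 : 0 ≤ x) (hx1 : x < 1) (n : ℕ) :
    ∑ i ∈ Finset.range n, (1+(i:ℝ)) * x^i ≤ ((1-x)⁻¹)^2 := by
  have hx : (0:ℝ) < 1 - x := by linarith
  have h2 : (0:ℝ) < (1-x)^2 := by positivity
  rw [inv_pow, ← one_div, le_div_iff₀ h2]
  rw [mul_comm, geom_id]
  have hxn : (0:ℝ) ≤ x^n := by positivity
  have hs : x^(n+1) = x^n * x := pow_succ x n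
  rw [hs]
  nlinarith [mul_nonneg (mul_nonneg (Nat.cast_nonneg n : (0:ℝ) ≤ n) hxn) (sub_nonneg.mpr hx1.le)]

lemma S1_le_nsq (x : ℝ) (hx0 : 0 ≤ x) (hx1 : x ≤ 1) (n : ℕ) :
    ∑ i ∈ Finset.range n, (1+(i:ℝ)) * x^i ≤ (n:ℝ)^2 := by
  calc ∑ i ∈ Finset.range n, (1+(i:ℝ)) * x^i ≤ ∑ i ∈ Finset.range n, (n:ℝ) := by
        apply Finset.sum_le_sum
        intro i hi
        have h1 : (1+(i:ℝ)) ≤ (n:ℝ) := by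
          have h := Finset.mem_range.mp hi
          have : (i:ℝ) + 1 ≤ (n:ℝ) := by exact_mod_cast Nat.succ_le_of_lt h
          linarith
        have h2 : x^i ≤ 1 := pow_le_one₀ hx0 hx1
        nlinarith [pow_nonneg hx0 i]
    _ = (n:ℝ) * (n:ℝ) := by rw [Finset.sum_const, Finset.card_range]; ring
    _ = (n:ℝ)^2 := (sq (n:ℝ)).symm

lemma sum_sq_le_sq_sum {ι : Type*} [Fintype ι] (a : ι → ℝ) (ha : ∀ i, 0 ≤ a i) :
    ∑ i, (a i)^2 ≤ (∑ i, a i)^2 := by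
  calc ∑ i, (a i)^2 = ∑ i, a i * a i := by simp [sq]
    _ ≤ ∑ i, a i * (∑ j, a j) := Finset.sum_le_sum (fun i _ =>
        mul_le_mul_of_nonneg_left (Finset.single_le_sum (fun j _ => ha j) (Finset.mem_univ i)) (ha i))
    _ = (∑ i, a i) * (∑ j, a j) := by rw [← Finset.sum_mul]
    _ = (∑ i, a i)^2 := (sq _).symm



lemma reduction : ∀ (n : ℕ) (Ψ : Matrix (Fin n) (Fin n) ℝ),
    (∀ i j, i < j → Ψ i j = 0) → (∀ i, Ψ i i = 1) →
    ∃ (B : Matrix (Fin n) (Fin n) ℝ) (M : Matrix (Fin n) (Fin n) ℤ),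
      (∀ i j, i < j → B i j = 0) ∧ (∀ i, B i i = 1) ∧ (∀ i j, j < i → |B i j| ≤ 1/2) ∧
      (∀ i j, i < j → M i j = 0) ∧ (∀ i, M i i = 1) ∧
      Ψ * B = M.map (Int.cast : ℤ → ℝ) := by
  intro n
  induction n with
  | zero =>
    intro Ψ _ _
    refine ⟨1, 1, fun i => i.elim0, fun i => i.elim0, fun i => i.elim0,
      fun i => i.elim0, fun i => i.elim0, Matrix.ext fun i _ => i.elim0⟩
  | succ n ih =>
    intro Ψ hl hd
    set Ψ' := Ψ.submatrix Fin.castSucc Fin.castSucc with hΨ'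
    have hl' : ∀ i j, i < j → Ψ' i j = 0 := fun i j h =>
      hl _ _ (by simpa [Fin.castSucc_lt_castSucc_iff] using h)
    have hd' : ∀ i, Ψ' i i = 1 := fun i => hd _
    obtain ⟨B', M', hBl, hBd, hBs, hMl, hMd, hEq⟩ := ih Ψ' hl' hd'
    set w : Fin n → ℝ := fun j => Ψ (Fin.last n) (Fin.castSucc j) with hw
    set r : Fin n → ℝ := fun j => ∑ k, w k * B' k j with hr
    set mv : Fin n → ℤ := fun j => round (r j) with hmv
    set bv : Fin n → ℝ := fun j => (mv j : ℝ) - r j with hbv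
    set B : Matrix (Fin (n+1)) (Fin (n+1)) ℝ :=
      Matrix.of (Fin.snoc (fun i => Fin.snoc (B' i) 0) (Fin.snoc bv 1)) with hB
    set M : Matrix (Fin (n+1)) (Fin (n+1)) ℤ :=
      Matrix.of (Fin.snoc (fun i => Fin.snoc (M' i) 0) (Fin.snoc mv 1)) with hM
    have hBcc : ∀ i j : Fin n, B i.castSucc j.castSucc = B' i j := by
      intro i j; simp [hB]
    have hBcl : ∀ i : Fin n, B i.castSucc (Fin.last n) = 0 := by
      intro i; simp [hB]
    have hBlc : ∀ j : Fin n, B (Fin.last n) j.castSucc = bv j := by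
      intro j; simp [hB]
    have hBll : B (Fin.last n) (Fin.last n) = 1 := by simp [hB]
    have hMcc : ∀ i j : Fin n, M i.castSucc j.castSucc = M' i j := by
      intro i j; simp [hM]
    have hMcl : ∀ i : Fin n, M i.castSucc (Fin.last n) = 0 := by
      intro i; simp [hM]
    have hMlc : ∀ j : Fin n, M (Fin.last n) j.castSucc = mv j := by
      intro j; simp [hM]
    have hMll : M (Fin.last n) (Fin.last n) = 1 := by simp [hM]
    refine ⟨B, M, ?_, ?_, ?_, ?_, ?_, ?_⟩
    · -- B lower
      intro i j hij
      induction j using Fin.lastCases with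
      | last =>
        induction i using Fin.lastCases with
        | last => exact absurd hij (lt_irrefl _)
        | cast i => exact hBcl i
      | cast j =>
        induction i using Fin.lastCases with
        | last => exact absurd hij (not_lt.mpr ((Fin.castSucc_lt_last j).le))
        | cast i => rw [hBcc]; exact hBl i j (by simpa [Fin.castSucc_lt_castSucc_iff] using hij)
    · -- B diag
      intro i
      induction i using Fin.lastCases with
      | last => exact hBll
      | cast i => rw [hBcc]; exact hBd i
    · -- B small
      intro i j hji
      induction i using Fin.lastCases with
      | last =>
        induction j using Fin.lastCases with
        | last => exact absurd hji (lt_irrefl _)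
        | cast j => rw [hBlc, hbv]; simpa [abs_sub_comm] using abs_sub_round (r j)
      | cast i =>
        induction j using Fin.lastCases with
        | last => exact absurd hji (not_lt.mpr ((Fin.castSucc_lt_last i).le))
        | cast j => rw [hBcc]; exact hBs i j (by simpa [Fin.castSucc_lt_castSucc_iff] using hji)
    · -- M lower
      intro i j hij
      induction j using Fin.lastCases with
      | last =>
        induction i using Fin.lastCases with
        | last => exact absurd hij (lt_irrefl _)
        | cast i => exact hMcl i
      | cast j =>
        induction i using Fin.lastCases with
        | last => exact absurd hij (not_lt.mpr ((Fin.castSucc_lt_last j).le))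
        | cast i => rw [hMcc]; exact hMl i j (by simpa [Fin.castSucc_lt_castSucc_iff] using hij)
    · -- M diag
      intro i
      induction i using Fin.lastCases with
      | last => exact hMll
      | cast i => rw [hMcc]; exact hMd i
    · -- product
      apply Matrix.ext
      intro i j
      rw [Matrix.mul_apply, Matrix.map_apply, Fin.sum_univ_castSucc]
      induction j using Fin.lastCases with
      | last =>
        induction i using Fin.lastCases with
        | last =>
          simp only [hBcl, mul_zero, Finset.sum_const_zero, zero_add, hBll, hMll, mul_one]
          rw [hd]; norm_num
        | cast i =>
          simp only [hBcl, mul_zero, Finset.sum_const_zero, zero_add, hBll, mul_one, hMcl]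
          rw [hl _ _ (Fin.castSucc_lt_last i)]; norm_num
      | cast j =>
        induction i using Fin.lastCases with
        | last =>
          simp only [hBcc, hBlc, hMlc, hBll]
          rw [hd]
          have hrj : ∑ x : Fin n, Ψ (Fin.last n) x.castSucc * B' x j = r j := rfl
          rw [hrj, one_mul]
          simp only [hbv]
          ring
        | cast i =>
          have hlast : Ψ i.castSucc (Fin.last n) * B (Fin.last n) j.castSucc = 0 := by
            rw [hl _ _ (Fin.castSucc_lt_last i), zero_mul]
          rw [hlast, add_zero, hMcc]
          have hterm : ∀ k : Fin n, Ψ i.castSucc k.castSucc * B k.castSucc j.castSucc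
              = Ψ' i k * B' k j := by intro k; rw [hBcc]; rfl
          rw [Finset.sum_congr rfl (fun k _ => hterm k)]
          have hij := congrFun (congrFun hEq i) j
          rw [Matrix.mul_apply, Matrix.map_apply] at hij
          exact hij

/-! ### Upper bound geometry -/

def Sv (γ : ℝ) (d : ℕ) : ℝ := ∑ i ∈ Finset.range (d+1), (1+(i:ℝ)) * γ^i

lemma Sv_nonneg (γ : ℝ) (d : ℕ) (hγ : 0 ≤ γ) : 0 ≤ Sv γ d :=
  Finset.sum_nonneg fun i _ => by positivity

lemma mulVec_cube_abs {d : ℕ} (B : Matrix (Fin (d+1)) (Fin (d+1)) ℝ)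
    (hBl : ∀ i j, i < j → B i j = 0) (hBd : ∀ i, B i i = 1)
    (hBs : ∀ i j, j < i → |B i j| ≤ 1/2) {u : Fin (d+1) → ℝ}
    (hu : u ∈ Q (Fin (d+1))) (i : Fin (d+1)) :
    |B.mulVec u i| ≤ 1 + ((i:ℕ):ℝ) := by
  have hu' : ∀ j, |u j| ≤ 1 := by
    intro j
    have hj := hu j (mem_univ j)
    rw [abs_le]
    exact ⟨by linarith [hj.1], by linarith [hj.2]⟩
  have hmv : B.mulVec u i = ∑ j, B i j * u j := rfl
  have hterm : ∀ j : Fin (d+1), |B i j * u j| ≤ (if j ≤ i then (1:ℝ) else 0) := by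
    intro j
    by_cases h : j ≤ i
    · rw [if_pos h, abs_mul]
      have hBij : |B i j| ≤ 1 := by
        rcases lt_or_eq_of_le h with hlt | heq
        · linarith [hBs i j hlt]
        · rw [heq, hBd]; simp
      calc |B i j| * |u j| ≤ 1 * 1 :=
        mul_le_mul hBij (hu' j) (abs_nonneg _) (by linarith [abs_nonneg (B i j)])
      _ = 1 := by ring
    · rw [if_neg h, hBl i j (lt_of_not_ge h), zero_mul, abs_zero]
  have hsum : ∑ j : Fin (d+1), (if j ≤ i then (1:ℝ) else 0) = ((i:ℕ):ℝ) + 1 := by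
    rw [← Finset.sum_subset (Finset.subset_univ (Finset.Iic i))
      (fun x _ hx => if_neg (fun h => hx (Finset.mem_Iic.mpr h)))]
    rw [Finset.sum_congr rfl (fun j hj => if_pos (Finset.mem_Iic.mp hj)),
      Finset.sum_const, Fin.card_Iic]
    simp
  calc |B.mulVec u i| = |∑ j, B i j * u j| := by rw [hmv]
    _ ≤ ∑ j, |B i j * u j| := Finset.abs_sum_le_sum_abs _ _
    _ ≤ ∑ j : Fin (d+1), (if j ≤ i then (1:ℝ) else 0) := Finset.sum_le_sum (fun j _ => hterm j)
    _ = ((i:ℕ):ℝ) + 1 := hsum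
    _ = 1 + ((i:ℕ):ℝ) := by ring

lemma norm_LmapB_cube (γ : ℝ) {d : ℕ} (hγ : 0 ≤ γ) (B : Matrix (Fin (d+1)) (Fin (d+1)) ℝ)
    (hBl : ∀ i j, i < j → B i j = 0) (hBd : ∀ i, B i i = 1)
    (hBs : ∀ i j, j < i → |B i j| ≤ 1/2) {u : Fin (d+1) → ℝ}
    (hu : u ∈ Q (Fin (d+1))) :
    ‖Lmap γ d (B.mulVec u)‖ ≤ Sv γ d := by
  rw [norm_Lmap_sq]
  have key : ∑ k : Fin (d+1), (B.mulVec u k)^2 * γ ^ (2*(k:ℕ)) ≤ (Sv γ d)^2 := by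
    have h1 : ∀ k : Fin (d+1), (B.mulVec u k)^2 * γ ^ (2*(k:ℕ))
        ≤ ((1+((k:ℕ):ℝ)) * γ^(k:ℕ))^2 := by
      intro k
      have ha : (B.mulVec u k)^2 ≤ (1+((k:ℕ):ℝ))^2 := by
        rw [← sq_abs (B.mulVec u k)]
        apply pow_le_pow_left₀ (abs_nonneg _) (mulVec_cube_abs B hBl hBd hBs hu k)
      calc (B.mulVec u k)^2 * γ ^ (2*(k:ℕ)) = (B.mulVec u k)^2 * (γ^(k:ℕ))^2 := by
            rw [mul_comm 2 (k:ℕ), pow_mul]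
        _ ≤ (1+((k:ℕ):ℝ))^2 * (γ^(k:ℕ))^2 := by
            apply mul_le_mul_of_nonneg_right ha (by positivity)
        _ = ((1+((k:ℕ):ℝ)) * γ^(k:ℕ))^2 := by ring
    calc ∑ k : Fin (d+1), (B.mulVec u k)^2 * γ ^ (2*(k:ℕ))
        ≤ ∑ k : Fin (d+1), ((1+((k:ℕ):ℝ)) * γ^(k:ℕ))^2 := Finset.sum_le_sum (fun k _ => h1 k)
      _ ≤ (∑ k : Fin (d+1), (1+((k:ℕ):ℝ)) * γ^(k:ℕ))^2 :=
          sum_sq_le_sq_sum _ (fun k => by positivity)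
      _ = (Sv γ d)^2 := by
          rw [Sv, ← Fin.sum_univ_eq_sum_range (fun i => (1+(i:ℝ)) * γ^i) (d+1)]
  calc Real.sqrt (∑ k : Fin (d+1), (B.mulVec u k)^2 * γ ^ (2*(k:ℕ)))
      ≤ Real.sqrt ((Sv γ d)^2) := Real.sqrt_le_sqrt key
    _ = Sv γ d := Real.sqrt_sq (Sv_nonneg γ d hγ)

lemma measurableSet_cell {ι : Type*} [Fintype ι] [DecidableEq ι] (c : ι → ℤ) :
    MeasurableSet (castZ c +ᵥ Q ι) := by
  have he : castZ c +ᵥ Q ι = (fun x => -castZ c + x) ⁻¹' Q ι := by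
    ext x
    rw [Set.mem_vadd_set_iff_neg_vadd_mem]
    rfl
  rw [he]
  exact measurableSet_Q.preimage (measurable_const_add _)

lemma upper_count (γ t : ℝ) (d : ℕ) (hγ : 0 < γ) (hγ1 : γ ≤ 1) (ht : 1 ≤ t)
    (B : Matrix (Fin (d+1)) (Fin (d+1)) ℝ)
    (hBl : ∀ i j, i < j → B i j = 0) (hBd : ∀ i, B i i = 1)
    (hBs : ∀ i j, j < i → |B i j| ≤ 1/2) (hdetB : B.det = 1) :
    (Nat.card {c : Fin (d+1) → ℤ // B.mulVec (castZ c) ∈ Es γ d t} : ENNReal)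
      ≤ volume (Es γ d (t + Sv γ d)) := by
  classical
  haveI : Invertible B := B.invertibleOfIsUnitDet (by rw [hdetB]; exact isUnit_one)
  have hpre : B.mulVec ⁻¹' (Es γ d t) = (⅟B).mulVec '' (Es γ d t) := by
    have h1 : (⅟B).mulVec '' (Es γ d t) = (⅟(⅟B)).mulVec ⁻¹' (Es γ d t) :=
      image_mulVec_eq_preimage (⅟B) _
    rw [h1, invOf_invOf]
  have hbdd : Bornology.IsBounded (B.mulVec ⁻¹' (Es γ d t)) := by
    rw [hpre]
    exact ((isCompact_Es γ d t hγ hγ1).image (measurable_mulVec _)).isBounded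
  have hT : {c : Fin (d+1) → ℤ | castZ c ∈ B.mulVec ⁻¹' (Es γ d t)}.Finite :=
    finite_int_in_bounded hbdd
  have hNcard : (Nat.card {c : Fin (d+1) → ℤ // B.mulVec (castZ c) ∈ Es γ d t} : ENNReal)
      = (hT.toFinset.card : ENNReal) := by
    have : Nat.card ↥{c : Fin (d+1) → ℤ | castZ c ∈ B.mulVec ⁻¹' (Es γ d t)}
        = hT.toFinset.card := by
      rw [Nat.card_coe_set_eq, Set.ncard_eq_toFinset_card _ hT]
    exact_mod_cast congrArg (Nat.cast (R := ENNReal)) this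
  have hvol1 : ∀ c : Fin (d+1) → ℤ,
      volume (B.mulVec '' (castZ c +ᵥ Q (Fin (d+1)))) = 1 := by
    intro c
    rw [volume_image_mulVec B hdetB, measure_vadd, volume_Q]
  have hdisj : (↑hT.toFinset : Set (Fin (d+1) → ℤ)).PairwiseDisjoint
      (fun c => B.mulVec '' (castZ c +ᵥ Q (Fin (d+1)))) := by
    intro c _ c' _ hcc'
    apply (Set.disjoint_image_iff (injective_mulVec' B)).mpr
    refine Set.disjoint_left.mpr ?_
    intro x hx hx'
    exact hcc' ((mem_cell_iff.mp hx).symm.trans (mem_cell_iff.mp hx'))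
  have hsub : (⋃ c ∈ hT.toFinset, B.mulVec '' (castZ c +ᵥ Q (Fin (d+1))))
      ⊆ Es γ d (t + Sv γ d) := by
    intro y hy
    simp only [mem_iUnion] at hy
    obtain ⟨c, hcF, hy'⟩ := hy
    obtain ⟨x, hx, rfl⟩ := hy'
    obtain ⟨u, huQ, rfl⟩ := hx
    have hc : B.mulVec (castZ c) ∈ Es γ d t := hT.mem_toFinset.mp hcF
    rw [mem_Es]
    simp only [vadd_eq_add, Matrix.mulVec_add, map_add]
    calc ‖Lmap γ d (B.mulVec (castZ c)) + Lmap γ d (B.mulVec u)‖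
        ≤ ‖Lmap γ d (B.mulVec (castZ c))‖ + ‖Lmap γ d (B.mulVec u)‖ := norm_add_le _ _
      _ ≤ t + Sv γ d := add_le_add hc (norm_LmapB_cube γ hγ.le B hBl hBd hBs huQ)
  calc (Nat.card {c : Fin (d+1) → ℤ // B.mulVec (castZ c) ∈ Es γ d t} : ENNReal)
      = (hT.toFinset.card : ENNReal) := hNcard
    _ = ∑ c ∈ hT.toFinset, (1 : ENNReal) := by simp
    _ = ∑ c ∈ hT.toFinset, volume (B.mulVec '' (castZ c +ᵥ Q (Fin (d+1)))) :=
        Finset.sum_congr rfl (fun c _ => (hvol1 c).symm)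
    _ = volume (⋃ c ∈ hT.toFinset, B.mulVec '' (castZ c +ᵥ Q (Fin (d+1)))) :=
        (measure_biUnion_finset hdisj
          (fun c _ => measurableSet_image_mulVec B (measurableSet_cell c))).symm
    _ ≤ volume (Es γ d (t + Sv γ d)) := measure_mono hsub

lemma scalar_bound (γ t : ℝ) (d : ℕ) (hγ : 0 < γ) (hγ1 : γ ≤ 1) (ht : 1 ≤ t) :
    ((t + Sv γ d)/t)^(d+1) ≤ Real.exp (2*((d:ℝ)+1)*(1 + Real.log
      (if γ = 1 then (d:ℝ)+1 else min ((d:ℝ)+1) (1-γ)⁻¹))) := by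
  set m : ℝ := if γ = 1 then (d:ℝ)+1 else min ((d:ℝ)+1) (1-γ)⁻¹ with hm_def
  have hd1 : (1:ℝ) ≤ (d:ℝ)+1 := by
    have : (0:ℝ) ≤ (d:ℝ) := Nat.cast_nonneg d
    linarith
  have hm1 : 1 ≤ m := by
    rw [hm_def]
    split_ifs with h
    · exact hd1
    · have hlt : γ < 1 := lt_of_le_of_ne hγ1 h
      refine le_min hd1 ?_
      rw [one_le_inv_iff₀]
      constructor <;> linarith
  have hSv : Sv γ d ≤ m^2 := by
    rw [hm_def]
    split_ifs with h
    · have := S1_le_nsq γ hγ.le hγ1 (d+1)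
      rw [Sv]
      calc ∑ i ∈ Finset.range (d+1), (1+(i:ℝ)) * γ^i ≤ ((d+1:ℕ):ℝ)^2 := this
        _ = ((d:ℝ)+1)^2 := by push_cast; ring
    · have hlt : γ < 1 := lt_of_le_of_ne hγ1 h
      have b1 : Sv γ d ≤ ((d:ℝ)+1)^2 := by
        have := S1_le_nsq γ hγ.le hγ1 (d+1)
        rw [Sv]
        calc ∑ i ∈ Finset.range (d+1), (1+(i:ℝ)) * γ^i ≤ ((d+1:ℕ):ℝ)^2 := this
          _ = ((d:ℝ)+1)^2 := by push_cast; ring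
      have b2 : Sv γ d ≤ ((1-γ)⁻¹)^2 := S1_le_inv γ hγ.le hlt (d+1)
      rcases le_total ((d:ℝ)+1) (1-γ)⁻¹ with hc | hc
      · rw [min_eq_left hc]; exact b1
      · rw [min_eq_right hc]; exact b2
  have htpos : (0:ℝ) < t := lt_of_lt_of_le one_pos ht
  have hSv0 : 0 ≤ Sv γ d := Sv_nonneg _ _ hγ.le
  have hstep : (t + Sv γ d)/t ≤ 1 + Sv γ d := by
    rw [div_le_iff₀ htpos]
    nlinarith
  have hm0 : (0:ℝ) < m := lt_of_lt_of_le one_pos hm1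
  have hexp : 1 + Sv γ d ≤ Real.exp (2*(1 + Real.log m)) := by
    have he : Real.exp (2*(1+Real.log m)) = Real.exp 2 * m^2 := by
      have h1 : 2*(1+Real.log m) = 2 + ((2:ℕ):ℝ) * Real.log m := by push_cast; ring
      rw [h1, Real.exp_add, Real.exp_nat_mul, Real.exp_log hm0]
    rw [he]
    have h2 : (2:ℝ) ≤ Real.exp 2 := by
      have := Real.add_one_le_exp (2:ℝ)
      linarith
    have hm2 : (1:ℝ) ≤ m^2 := one_le_pow₀ hm1
    nlinarith [mul_le_mul_of_nonneg_right h2 (sq_nonneg m)]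
  have hnn : 0 ≤ (t + Sv γ d)/t := by positivity
  calc ((t + Sv γ d)/t)^(d+1) ≤ (Real.exp (2*(1+Real.log m)))^(d+1) :=
      pow_le_pow_left₀ hnn (le_trans hstep hexp) _
    _ = Real.exp (((d+1:ℕ):ℝ) * (2*(1+Real.log m))) := by rw [Real.exp_nat_mul]
    _ = Real.exp (2*((d:ℝ)+1)*(1 + Real.log m)) := by
        congr 1
        push_cast
        ring

end S18

end

open S18 in
/-- Lattice-point count versus volume for unipotent images of the ellipsoid
`E = {x : ∑_k x_k² γ^{2k} ≤ t²}`: there is an absolute constant `C₂ > 0` with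
`2^{-(d+1)} vol(E) ≤ #(Ψ(E) ∩ ℤ^{d+1}) ≤ vol(E)·exp(C₂ (d+1)(1 + log m))`. -/
theorem stmt_18 :
    ∃ C₂ : ℝ, 0 < C₂ ∧
      ∀ (d : ℕ) (γ t : ℝ), 0 < γ → γ ≤ 1 → 1 ≤ t →
        ∀ Ψ : Matrix (Fin (d + 1)) (Fin (d + 1)) ℝ,
          (∀ i j : Fin (d + 1), i < j → Ψ i j = 0) →
          (∀ i : Fin (d + 1), Ψ i i = 1) →
          ((2 : ℝ) ^ (d + 1))⁻¹ *
              (volume {x : Fin (d + 1) → ℝ |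
                ∑ k : Fin (d + 1), (x k) ^ 2 * γ ^ (2 * (k : ℕ)) ≤ t ^ 2}).toReal
            ≤ (Nat.card {x : Fin (d + 1) → ℝ //
                x ∈ Ψ.mulVec '' {x : Fin (d + 1) → ℝ |
                  ∑ k : Fin (d + 1), (x k) ^ 2 * γ ^ (2 * (k : ℕ)) ≤ t ^ 2} ∧
                ∀ k : Fin (d + 1), ∃ z : ℤ, x k = (z : ℝ)} : ℝ) ∧
          (Nat.card {x : Fin (d + 1) → ℝ //
                x ∈ Ψ.mulVec '' {x : Fin (d + 1) → ℝ |
                  ∑ k : Fin (d + 1), (x k) ^ 2 * γ ^ (2 * (k : ℕ)) ≤ t ^ 2} ∧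
                ∀ k : Fin (d + 1), ∃ z : ℤ, x k = (z : ℝ)} : ℝ)
            ≤ (volume {x : Fin (d + 1) → ℝ |
                ∑ k : Fin (d + 1), (x k) ^ 2 * γ ^ (2 * (k : ℕ)) ≤ t ^ 2}).toReal *
              Real.exp (C₂ * (d + 1) *
                (1 + Real.log (if γ = 1 then (d : ℝ) + 1
                  else min ((d : ℝ) + 1) (1 - γ)⁻¹))) := by
  refine ⟨2, two_pos, ?_⟩
  intro d γ t hγ hγ1 ht Ψ hΨl hΨd
  have ht0 : (0:ℝ) ≤ t := le_trans zero_le_one ht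
  have hEset := Es_eq_set γ t d ht0
  rw [hEset]
  have hdetΨ : Ψ.det = 1 := det_one_of_lowerUnipotent Ψ hΨl hΨd
  haveI : Invertible Ψ := Ψ.invertibleOfIsUnitDet (by rw [hdetΨ]; exact isUnit_one)
  obtain ⟨B, M, hBl, hBd, hBs, hMl, hMd, hPB⟩ := reduction (d+1) Ψ hΨl hΨd
  have hdetM : M.det = 1 := det_one_of_lowerUnipotent M hMl hMd
  haveI : Invertible M := M.invertibleOfIsUnitDet (by rw [hdetM]; exact isUnit_one)
  have hdetMc : (M.map (Int.cast : ℤ → ℝ)).det = 1 := by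
    have hmm : (M.map (Int.cast : ℤ → ℝ)) = (Int.castRingHom ℝ).mapMatrix M := rfl
    rw [hmm, ← RingHom.map_det, hdetM]
    simp
  have hdetB : B.det = 1 := by
    have h := congrArg Matrix.det hPB
    rw [Matrix.det_mul, hdetΨ, one_mul, hdetMc] at h
    exact h
  have hKb : Bornology.IsBounded (Ψ.mulVec '' Es γ d t) :=
    ((isCompact_Es γ d t hγ hγ1).image (measurable_mulVec Ψ)).isBounded
  have hTfin : {y : Fin (d+1) → ℤ | castZ y ∈ Ψ.mulVec '' Es γ d t}.Finite :=
    finite_int_in_bounded hKb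
  have hfin : volume (Es γ d t) ≠ ⊤ := (volume_Es_lt_top γ d t hγ hγ1).ne
  have hN1 : Nat.card {x : Fin (d+1) → ℝ //
        x ∈ Ψ.mulVec '' Es γ d t ∧ ∀ k : Fin (d+1), ∃ z : ℤ, x k = (z:ℝ)}
      = Nat.card {y : Fin (d+1) → ℤ // castZ y ∈ Ψ.mulVec '' Es γ d t} :=
    Nat.card_congr (eqvInt _)
  have hN2 : Nat.card {y : Fin (d+1) → ℤ // castZ y ∈ Ψ.mulVec '' Es γ d t}
      = Nat.card {c : Fin (d+1) → ℤ // B.mulVec (castZ c) ∈ Es γ d t} :=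
    (Nat.card_congr (eqvLat (Es γ d t) Ψ B M hPB)).symm
  constructor
  · -- lower bound
    have hH : MeasurableSet (Ψ.mulVec '' Es γ d (t/2)) :=
      measurableSet_image_mulVec Ψ (measurableSet_Es γ d (t/2))
    have hsub : ∀ a b, a ∈ Ψ.mulVec '' Es γ d (t/2) → b ∈ Ψ.mulVec '' Es γ d (t/2) →
        a - b ∈ Ψ.mulVec '' Es γ d t := by
      rintro a b ⟨x, hx, rfl⟩ ⟨y, hy, rfl⟩
      refine ⟨x - y, ?_, Matrix.mulVec_sub Ψ x y⟩
      rw [mem_Es, map_sub]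
      calc ‖Lmap γ d x - Lmap γ d y‖ ≤ ‖Lmap γ d x‖ + ‖Lmap γ d y‖ := norm_sub_le _ _
        _ ≤ t/2 + t/2 := add_le_add hx hy
        _ = t := by ring
    have hlow := lower_core (Ψ.mulVec '' Es γ d (t/2)) (Ψ.mulVec '' Es γ d t) hH hsub hTfin
    have hvolH : volume (Ψ.mulVec '' Es γ d (t/2))
        = ENNReal.ofReal ((1/2:ℝ)^(d+1)) * volume (Es γ d t) := by
      rw [volume_image_mulVec Ψ hdetΨ]
      have h12 : t/2 = (1/2:ℝ) * t := by ring
      rw [h12, volume_Es_scale γ d (by norm_num : (0:ℝ) < 1/2) t]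
    rw [hvolH] at hlow
    have h2 := ENNReal.toReal_mono (ENNReal.natCast_ne_top _) hlow
    rw [ENNReal.toReal_mul, ENNReal.toReal_ofReal (by positivity),
      ENNReal.toReal_natCast] at h2
    rw [hN1]
    have heq : ((2:ℝ)^(d+1))⁻¹ = (1/2:ℝ)^(d+1) := by rw [one_div, inv_pow]
    rw [heq]
    exact h2
  · -- upper bound
    rw [hN1, hN2]
    have hup := upper_count γ t d hγ hγ1 ht B hBl hBd hBs hdetB
    have htpos : (0:ℝ) < t := lt_of_lt_of_le one_pos ht
    set a : ℝ := (t + Sv γ d)/t with ha_def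
    have hat : a * t = t + Sv γ d := div_mul_cancel₀ _ htpos.ne'
    have hapos : 0 < a := div_pos (by linarith [Sv_nonneg γ d hγ.le]) htpos
    have hvolE2 : volume (Es γ d (t + Sv γ d))
        = ENNReal.ofReal (a^(d+1)) * volume (Es γ d t) := by
      rw [← hat, volume_Es_scale γ d hapos t]
    rw [hvolE2] at hup
    have h3 := ENNReal.toReal_mono
      (ENNReal.mul_ne_top ENNReal.ofReal_ne_top hfin) hup
    rw [ENNReal.toReal_mul, ENNReal.toReal_ofReal (pow_nonneg hapos.le _),
      ENNReal.toReal_natCast] at h3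
    calc (Nat.card {c : Fin (d+1) → ℤ // B.mulVec (castZ c) ∈ Es γ d t} : ℝ)
        ≤ a^(d+1) * (volume (Es γ d t)).toReal := h3
      _ ≤ Real.exp (2*((d:ℝ)+1)*(1 + Real.log
            (if γ = 1 then (d:ℝ)+1 else min ((d:ℝ)+1) (1-γ)⁻¹)))
          * (volume (Es γ d t)).toReal :=
          mul_le_mul_of_nonneg_right (scalar_bound γ t d hγ hγ1 ht) ENNReal.toReal_nonneg
      _ = (volume (Es γ d t)).toReal * Real.exp (2*((d:ℝ)+1)*(1 + Real.log
            (if γ = 1 then (d:ℝ)+1 else min ((d:ℝ)+1) (1-γ)⁻¹))) := mul_comm _ _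
end
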